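/- arXiv:1803.04216 — 7 statements merged into one kernel-verified Lean document; each statement's English description precedes it below -/
import Mathlib

section
/- Let t_k ≤ T, let x_0 ∈ ℝ^n, and let x : [t_k, T] → ℝ^n be differentiable with ẋ(t) = f(x(t)) + g(x(t_k)) + h(x_0) for all t ∈ [t_k, T]. Then for every t ∈ [t_k, T], writing ζ := t − t_k: ‖x(t) − x(t_k)‖ ≤ (1 + L_g/L_f) (e^{L_f ζ} − 1) ‖x(t_k) − x̄‖ + (L_h/L_f) (e^{L_f ζ} − 1) ‖x_0 − x̄‖. -/
/-- Bound on `‖x(t) − x(t_k)‖` for a solution of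
`ẋ(t) = f(x(t)) + g(x(t_k)) + h(x₀)` on `[t_k, T]`, in terms of
`‖x(t_k) − x̄‖` and `‖x₀ − x̄‖`, where `x̄` is an equilibrium of `f + g + h`. -/
theorem state_deviation_bound_inner_loop
    {n : ℕ} (f g h : EuclideanSpace ℝ (Fin n) → EuclideanSpace ℝ (Fin n))
    (Lf Lg Lh : ℝ) (hLf : 0 < Lf) (hLg : 0 < Lg) (hLh : 0 < Lh)
    (hf : ∀ a b, ‖f a - f b‖ ≤ Lf * ‖a - b‖)
    (hg : ∀ a b, ‖g a - g b‖ ≤ Lg * ‖a - b‖)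
    (hh : ∀ a b, ‖h a - h b‖ ≤ Lh * ‖a - b‖)
    (xb : EuclideanSpace ℝ (Fin n)) (heq : f xb + g xb + h xb = 0)
    (tk T : ℝ) (htkT : tk ≤ T)
    (x0 : EuclideanSpace ℝ (Fin n)) (x : ℝ → EuclideanSpace ℝ (Fin n))
    (hx : ∀ s ∈ Set.Icc tk T, HasDerivAt x (f (x s) + g (x tk) + h x0) s)
    (t : ℝ) (ht : t ∈ Set.Icc tk T) :
    ‖x t - x tk‖ ≤
      (1 + Lg / Lf) * (Real.exp (Lf * (t - tk)) - 1) * ‖x tk - xb‖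
        + (Lh / Lf) * (Real.exp (Lf * (t - tk)) - 1) * ‖x0 - xb‖ := by
  set ε := (Lf + Lg) * ‖x tk - xb‖ + Lh * ‖x0 - xb‖ with hε
  set F : ℝ → EuclideanSpace ℝ (Fin n) := fun s => x s - x tk with hF
  have hcont : ContinuousOn F (Set.Icc tk T) := fun s hs =>
    (((hx s hs).continuousAt.continuousWithinAt).sub continuousWithinAt_const)
  have hderiv : ∀ s ∈ Set.Ico tk T,
      HasDerivWithinAt F (f (x s) + g (x tk) + h x0) (Set.Ici s) s := fun s hs =>
    (((hx s ⟨hs.1, hs.2.le⟩).sub_const (x tk)).hasDerivWithinAt)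
  have hbound : ∀ s ∈ Set.Ico tk T,
      ‖f (x s) + g (x tk) + h x0‖ ≤ Lf * ‖F s‖ + ε := by
    intro s hs
    have key : f (x s) + g (x tk) + h x0
        = (f (x s) - f (x tk)) + ((f (x tk) - f xb) + (g (x tk) - g xb) + (h x0 - h xb))
          + (f xb + g xb + h xb) := by abel
    rw [heq, add_zero] at key
    rw [key]
    have h1 := hf (x s) (x tk)
    have h2 := hf (x tk) xb
    have h3 := hg (x tk) xb
    have h4 := hh x0 xb
    calc ‖(f (x s) - f (x tk)) + ((f (x tk) - f xb) + (g (x tk) - g xb) + (h x0 - h xb))‖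
        ≤ ‖f (x s) - f (x tk)‖ + (‖f (x tk) - f xb‖ + ‖g (x tk) - g xb‖ + ‖h x0 - h xb‖) := by
          refine (norm_add_le _ _).trans ?_
          gcongr
          exact (norm_add_le _ _).trans (by gcongr; exact norm_add_le _ _)
      _ ≤ Lf * ‖F s‖ + ε := by simp only [hF, hε]; nlinarith [norm_nonneg (x s - x tk)]
  have := norm_le_gronwallBound_of_norm_deriv_right_le (δ := 0) hcont hderiv
    (le_of_eq (by simp [hF])) hbound t ht
  rw [gronwallBound_of_K_ne_0 hLf.ne'] at this
  simp only [hF, hε] at this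
  have hrw : (1 + Lg / Lf) * (Real.exp (Lf * (t - tk)) - 1) * ‖x tk - xb‖
        + (Lh / Lf) * (Real.exp (Lf * (t - tk)) - 1) * ‖x0 - xb‖
      = 0 * Real.exp (Lf * (t - tk))
        + ((Lf + Lg) * ‖x tk - xb‖ + Lh * ‖x0 - xb‖) / Lf * (Real.exp (Lf * (t - tk)) - 1) := by
    simp only [zero_mul, zero_add]
    field_simp
  rw [hrw]
  exact this
end

section
/- Let t_k ≤ T, let x_0 ∈ ℝ^n, and let x : [t_k, T] → ℝ^n be differentiable with ẋ(t) = f(x(t)) + g(x(t_k)) + h(x_0) for all t ∈ [t_k, T]. Let t ∈ [t_k, T], write ζ := t − t_k, and assume L_f − (L_f + L_g)(e^{L_f ζ} − 1) > 0. Then ‖x(t) − x(t_k)‖ ≤ [L_h (e^{L_f ζ} − 1) ‖x_0 − x̄‖ + (L_f + L_g)(e^{L_f ζ} − 1) ‖x(t) − x̄‖] / [L_f − (L_f + L_g)(e^{L_f ζ} − 1)]. -/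
/-!
Write `y(s) = x(s) - x(t_k)` and `r = f(x(t_k)) + g(x(t_k)) + h(x₀)`. Then
`y' = (f(x(s)) - f(x(t_k))) + r`, so `‖y'‖ ≤ L_f ‖y‖ + ‖r‖` and Grönwall's inequality gives
`L_f ‖y(t)‖ ≤ ‖r‖ (e^{L_f ζ} - 1)`. Since `x̄` is an equilibrium,
`‖r‖ ≤ (L_f + L_g) ‖x(t_k) - x̄‖ + L_h ‖x₀ - x̄‖`, and `‖x(t_k) - x̄‖ ≤ ‖y(t)‖ + ‖x(t) - x̄‖`.
The resulting inequality is linear in `‖y(t)‖`, and the positive denominator lets us solve for it.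
-/

open Set

theorem mul_norm_sub_le_of_hasDerivAt_add_const
    {E : Type*} [NormedAddCommGroup E] [NormedSpace ℝ E]
    {F : E → E} {K : ℝ} (hK : 0 < K) (hF : ∀ a b, ‖F a - F b‖ ≤ K * ‖a - b‖) (c : E)
    {x : ℝ → E} {a t : ℝ} (hat : a ≤ t)
    (hx : ∀ s ∈ Icc a t, HasDerivAt x (F (x s) + c) s) :
    K * ‖x t - x a‖ ≤ ‖F (x a) + c‖ * (Real.exp (K * (t - a)) - 1) := by
  have hy : ∀ s ∈ Icc a t,
      HasDerivAt (fun s => x s - x a) ((F (x s) - F (x a)) + (F (x a) + c)) s := by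
    intro s hs
    convert (hx s hs).sub_const (x a) using 1
    abel
  have hgron := norm_le_gronwallBound_of_norm_deriv_right_le (δ := 0)
    (fun s hs => (hy s hs).continuousAt.continuousWithinAt)
    (fun s hs => (hy s (Ico_subset_Icc_self hs)).hasDerivWithinAt)
    (by simp)
    (fun s _ => (norm_add_le _ _).trans (add_le_add_left (hF _ _) _))
    t (right_mem_Icc.2 hat)
  rw [gronwallBound_of_K_ne_0 hK.ne'] at hgron
  calc K * ‖x t - x a‖
      ≤ K * (0 * Real.exp (K * (t - a)) + ‖F (x a) + c‖ / K * (Real.exp (K * (t - a)) - 1)) :=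
        mul_le_mul_of_nonneg_left hgron hK.le
    _ = ‖F (x a) + c‖ * (Real.exp (K * (t - a)) - 1) := by field_simp; ring

theorem norm_add_add_le_of_add_add_eq_zero {E : Type*} [SeminormedAddCommGroup E]
    {f g h : E → E} {Lf Lg Lh : ℝ}
    (hf : ∀ a b, ‖f a - f b‖ ≤ Lf * ‖a - b‖)
    (hg : ∀ a b, ‖g a - g b‖ ≤ Lg * ‖a - b‖)
    (hh : ∀ a b, ‖h a - h b‖ ≤ Lh * ‖a - b‖)
    {xb : E} (heq : f xb + g xb + h xb = 0) (y z : E) :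
    ‖f y + g y + h z‖ ≤ (Lf + Lg) * ‖y - xb‖ + Lh * ‖z - xb‖ := by
  have hsplit : f y + g y + h z = (f y - f xb) + (g y - g xb) + (h z - h xb) := by
    rw [← sub_zero (f y + g y + h z), ← heq]; abel
  calc ‖f y + g y + h z‖
      ≤ ‖f y - f xb‖ + ‖g y - g xb‖ + ‖h z - h xb‖ := hsplit ▸ norm_add₃_le
    _ ≤ Lf * ‖y - xb‖ + Lg * ‖y - xb‖ + Lh * ‖z - xb‖ := by gcongr <;> apply_assumption
    _ = (Lf + Lg) * ‖y - xb‖ + Lh * ‖z - xb‖ := by ring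

theorem state_deviation_bound_inner_loop_implicit_general
    {n : ℕ} (f g h : EuclideanSpace ℝ (Fin n) → EuclideanSpace ℝ (Fin n))
    (Lf Lg Lh : ℝ) (hLf : 0 < Lf) (hLg : 0 < Lg)
    (hf : ∀ a b, ‖f a - f b‖ ≤ Lf * ‖a - b‖)
    (hg : ∀ a b, ‖g a - g b‖ ≤ Lg * ‖a - b‖)
    (hh : ∀ a b, ‖h a - h b‖ ≤ Lh * ‖a - b‖)
    (xb : EuclideanSpace ℝ (Fin n)) (heq : f xb + g xb + h xb = 0)
    (tk T : ℝ)
    (x0 : EuclideanSpace ℝ (Fin n)) (x : ℝ → EuclideanSpace ℝ (Fin n))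
    (hx : ∀ s ∈ Set.Icc tk T, HasDerivAt x (f (x s) + g (x tk) + h x0) s)
    (t : ℝ) (ht : t ∈ Set.Icc tk T)
    (hden : 0 < Lf - (Lf + Lg) * (Real.exp (Lf * (t - tk)) - 1)) :
    ‖x t - x tk‖ ≤
      (Lh * (Real.exp (Lf * (t - tk)) - 1) * ‖x0 - xb‖
          + (Lf + Lg) * (Real.exp (Lf * (t - tk)) - 1) * ‖x t - xb‖)
        / (Lf - (Lf + Lg) * (Real.exp (Lf * (t - tk)) - 1)) := by
  obtain ⟨htk, htT⟩ := ht
  set e := Real.exp (Lf * (t - tk)) - 1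
  have he : 0 ≤ e := sub_nonneg.2 (Real.one_le_exp (mul_nonneg hLf.le (sub_nonneg.2 htk)))
  have hgron : Lf * ‖x t - x tk‖ ≤ ‖f (x tk) + g (x tk) + h x0‖ * e := by
    rw [add_assoc]
    exact mul_norm_sub_le_of_hasDerivAt_add_const hLf hf _ htk
      fun s hs => add_assoc (f (x s)) _ _ ▸ hx s ⟨hs.1, hs.2.trans htT⟩
  have hres := norm_add_add_le_of_add_add_eq_zero hf hg hh heq (x tk) x0
  have htri : ‖x tk - xb‖ ≤ ‖x t - x tk‖ + ‖x t - xb‖ :=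
    norm_sub_rev (x t) (x tk) ▸ norm_sub_le_norm_sub_add_norm_sub _ _ _
  rw [le_div_iff₀ hden]
  linarith [mul_le_mul_of_nonneg_right hres he,
    mul_le_mul_of_nonneg_left htri (mul_nonneg (add_pos hLf hLg).le he)]

/-- Bound on `‖x(t) − x(t_k)‖` for a solution of
`ẋ(t) = f(x(t)) + g(x(t_k)) + h(x₀)` on `[t_k, T]`, in terms of
`‖x(t) − x̄‖` and `‖x₀ − x̄‖`, valid when
`L_f − (L_f + L_g)(e^{L_f ζ} − 1) > 0` with `ζ = t − t_k`. -/
theorem state_deviation_bound_inner_loop_implicit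
    {n : ℕ} (f g h : EuclideanSpace ℝ (Fin n) → EuclideanSpace ℝ (Fin n))
    (Lf Lg Lh : ℝ) (hLf : 0 < Lf) (hLg : 0 < Lg) (hLh : 0 < Lh)
    (hf : ∀ a b, ‖f a - f b‖ ≤ Lf * ‖a - b‖)
    (hg : ∀ a b, ‖g a - g b‖ ≤ Lg * ‖a - b‖)
    (hh : ∀ a b, ‖h a - h b‖ ≤ Lh * ‖a - b‖)
    (xb : EuclideanSpace ℝ (Fin n)) (heq : f xb + g xb + h xb = 0)
    (tk T : ℝ) (htkT : tk ≤ T)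
    (x0 : EuclideanSpace ℝ (Fin n)) (x : ℝ → EuclideanSpace ℝ (Fin n))
    (hx : ∀ s ∈ Set.Icc tk T, HasDerivAt x (f (x s) + g (x tk) + h x0) s)
    (t : ℝ) (ht : t ∈ Set.Icc tk T)
    (hden : 0 < Lf - (Lf + Lg) * (Real.exp (Lf * (t - tk)) - 1)) :
    ‖x t - x tk‖ ≤
      (Lh * (Real.exp (Lf * (t - tk)) - 1) * ‖x0 - xb‖
          + (Lf + Lg) * (Real.exp (Lf * (t - tk)) - 1) * ‖x t - xb‖)
        / (Lf - (Lf + Lg) * (Real.exp (Lf * (t - tk)) - 1)) :=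
  state_deviation_bound_inner_loop_implicit_general f g h Lf Lg Lh hLf hLg hf hg hh xb heq tk T x0 x
    hx t ht hden
end

section
/- Let t_0 < t_1 < ... < t_k ≤ T, and let x : [t_0, T] → ℝ^n be continuous and differentiable on each open interval (t_j, t_{j+1}) for j = 0,...,k−1 and on (t_k, T), with ẋ(t) = f(x(t)) + g(x(t_j)) + h(x(t_0)) on (t_j, t_{j+1}) and ẋ(t) = f(x(t)) + g(x(t_k)) + h(x(t_0)) on (t_k, T). Set L := L_f + L_g + L_h. Then for every t ∈ [t_0, T]: ‖x(t) − x(t_0)‖ ≤ (L/(L_f + L_g)) (e^{(L_f + L_g)(t − t_0)} − 1) ‖x(t_0) − x̄‖. -/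
open Set Filter Real
open scoped Topology

/-- Right derivative at the left endpoint of an interval, from differentiability
on the open interval plus convergence of the derivative. -/
lemma rightDeriv_left_endpoint {E : Type*} [NormedAddCommGroup E] [NormedSpace ℝ E]
    {x D : ℝ → E} {a b : ℝ} (hab : a < b)
    (hcont : ContinuousWithinAt x (Set.Icc a b) a)
    (hder : ∀ s ∈ Set.Ioo a b, HasDerivAt x (D s) s)
    (hDa : ContinuousWithinAt D (Set.Ioo a b) a) :
    HasDerivWithinAt x (D a) (Set.Ici a) a := by
  have hmem : Set.Ioo a b ∈ 𝓝[>] a := Ioo_mem_nhdsGT_of_mem ⟨le_refl a, hab⟩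
  apply hasDerivWithinAt_Ici_of_tendsto_deriv
    (fun s hs => ((hder s hs).differentiableAt).differentiableWithinAt)
    (hcont.mono Set.Ioo_subset_Icc_self) hmem
  have h1 : Tendsto D (𝓝[>] a) (𝓝 (D a)) :=
    hDa.tendsto.mono_left (nhdsWithin_le_of_mem hmem)
  exact h1.congr' (Filter.eventuallyEq_of_mem hmem fun s hs => ((hder s hs).deriv).symm)

set_option maxHeartbeats 1000000 in
/-- Bound on `‖x(t) − x(t₀)‖` for a continuous solution of the piecewise
dynamics `ẋ = f(x) + g(x(t_j)) + h(x(t₀))` on `(t_j, t_{j+1})` (and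
`ẋ = f(x) + g(x(t_k)) + h(x(t₀))` on `(t_k, T)`), in terms of
`‖x(t₀) − x̄‖`, where `x̄` is an equilibrium of `f + g + h` and
`L = L_f + L_g + L_h`. -/
theorem state_deviation_bound_outer_loop
    {n : ℕ} (f g h : EuclideanSpace ℝ (Fin n) → EuclideanSpace ℝ (Fin n))
    (Lf Lg Lh : ℝ) (hLf : 0 < Lf) (hLg : 0 < Lg) (hLh : 0 < Lh)
    (hf : ∀ a b, ‖f a - f b‖ ≤ Lf * ‖a - b‖)
    (hg : ∀ a b, ‖g a - g b‖ ≤ Lg * ‖a - b‖)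
    (hh : ∀ a b, ‖h a - h b‖ ≤ Lh * ‖a - b‖)
    (xb : EuclideanSpace ℝ (Fin n)) (heq : f xb + g xb + h xb = 0)
    (k : ℕ) (t : ℕ → ℝ) (T : ℝ)
    (hmono : ∀ j < k, t j < t (j + 1)) (hkT : t k ≤ T)
    (x : ℝ → EuclideanSpace ℝ (Fin n))
    (hcont : ContinuousOn x (Set.Icc (t 0) T))
    (hode : ∀ j < k, ∀ s ∈ Set.Ioo (t j) (t (j + 1)),
      HasDerivAt x (f (x s) + g (x (t j)) + h (x (t 0))) s)
    (hodeLast : ∀ s ∈ Set.Ioo (t k) T,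
      HasDerivAt x (f (x s) + g (x (t k)) + h (x (t 0))) s) :
    ∀ u ∈ Set.Icc (t 0) T,
      ‖x u - x (t 0)‖ ≤
        (Lf + Lg + Lh) / (Lf + Lg) * (Real.exp ((Lf + Lg) * (u - t 0)) - 1)
          * ‖x (t 0) - xb‖ := by
  have hz0 : (0:ℝ) ≤ ‖x (t 0) - xb‖ := norm_nonneg _
  set z0 : ℝ := ‖x (t 0) - xb‖ with hz0def
  set K : ℝ := Lf + Lg with hKdef
  have hKpos : 0 < K := by positivity
  set B : ℝ → ℝ := fun u => (Lf + Lg + Lh) / K * (Real.exp (K * (u - t 0)) - 1) * z0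
    with hBdef
  have hBval : ∀ u, B u = (Lf + Lg + Lh) / K * (Real.exp (K * (u - t 0)) - 1) * z0 :=
    fun u => rfl
  have hBt0 : B (t 0) = 0 := by rw [hBval]; simp
  have hc : (0:ℝ) ≤ (Lf + Lg + Lh) / K := by positivity
  have hBmono : ∀ u v : ℝ, u ≤ v → B u ≤ B v := by
    intro u v huv
    rw [hBval, hBval]
    have hee : Real.exp (K * (u - t 0)) ≤ Real.exp (K * (v - t 0)) :=
      Real.exp_le_exp.2 (by nlinarith)
    exact mul_le_mul_of_nonneg_right
      (mul_le_mul_of_nonneg_left (by linarith) hc) hz0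
  have hBode : ∀ s, K * B s + (Lf + Lg + Lh) * z0
      = (Lf + Lg + Lh) * Real.exp (K * (s - t 0)) * z0 := by
    intro s
    rw [hBval]
    field_simp
    ring
  -- continuity of f
  have hfc : Continuous f := by
    have : LipschitzWith ⟨Lf, hLf.le⟩ f := by
      apply LipschitzWith.of_dist_le_mul
      intro a b
      rw [dist_eq_norm]
      rw [dist_eq_norm]
      exact hf a b
    exact this.continuous
  -- norm bound on the vector field
  have hnorm3 : ∀ p q, ‖f p + g q + h (x (t 0))‖
      ≤ Lf * ‖p - xb‖ + Lg * ‖q - xb‖ + Lh * z0 := by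
    intro p q
    have hrw : f p + g q + h (x (t 0))
        = (f p - f xb) + (g q - g xb) + (h (x (t 0)) - h xb) := by
      calc f p + g q + h (x (t 0))
          = (f p - f xb) + (g q - g xb) + (h (x (t 0)) - h xb)
              + (f xb + g xb + h xb) := by abel
        _ = (f p - f xb) + (g q - g xb) + (h (x (t 0)) - h xb) := by
              rw [heq, add_zero]
    rw [hrw]
    calc ‖(f p - f xb) + (g q - g xb) + (h (x (t 0)) - h xb)‖
        ≤ ‖f p - f xb‖ + ‖g q - g xb‖ + ‖h (x (t 0)) - h xb‖ := norm_add₃_le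
      _ ≤ Lf * ‖p - xb‖ + Lg * ‖q - xb‖ + Lh * z0 := by
          gcongr <;> [exact hf p xb; exact hg q xb; exact hh (x (t 0)) xb]
  -- main step lemma on a single interval
  have step : ∀ a b : ℝ, t 0 ≤ a → a < b → b ≤ T →
      ‖x a - x (t 0)‖ ≤ B a →
      (∀ s ∈ Set.Ioo a b, HasDerivAt x (f (x s) + g (x a) + h (x (t 0))) s) →
      ∀ u ∈ Set.Icc a b, ‖x u - x (t 0)‖ ≤ B u := by
    intro a b ht0a hab hbT hBa hder u hu
    have hsub : Set.Icc a b ⊆ Set.Icc (t 0) T := Set.Icc_subset_Icc ht0a hbT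
    have hxc : ContinuousOn x (Set.Icc a b) := hcont.mono hsub
    set w : ℝ → EuclideanSpace ℝ (Fin n) := fun u => x u - x (t 0) with hwdef
    set D : ℝ → EuclideanSpace ℝ (Fin n) :=
      fun s => f (x s) + g (x a) + h (x (t 0)) with hDdef
    have hwc : ContinuousOn w (Set.Icc a b) := hxc.sub continuousOn_const
    have hw' : ∀ s ∈ Set.Ico a b, HasDerivWithinAt w (D s) (Set.Ici s) s := by
      intro s hs
      rcases eq_or_lt_of_le hs.1 with heq' | hlt
      · subst heq'
        have hxa : ContinuousWithinAt x (Set.Icc a b) a :=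
          hxc a (Set.left_mem_Icc.2 hab.le)
        have hDa : ContinuousWithinAt D (Set.Ioo a b) a := by
          apply ContinuousWithinAt.add
          apply ContinuousWithinAt.add
          · exact hfc.continuousAt.comp_continuousWithinAt
              (hxa.mono Set.Ioo_subset_Icc_self)
          · exact continuousWithinAt_const
          · exact continuousWithinAt_const
        have hx' := rightDeriv_left_endpoint hab hxa hder hDa
        exact hx'.sub_const (x (t 0))
      · exact ((hder s ⟨hlt, hs.2⟩).sub_const (x (t 0))).hasDerivWithinAt
    -- for each ε > 0, compare with the perturbed bound
    have hε : ∀ ε : ℝ, 0 < ε → ‖w u‖ ≤ B u + ε * Real.exp (K * (u - t 0)) := by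
      intro ε hεpos
      set Bε : ℝ → ℝ := fun s => B s + ε * Real.exp (K * (s - t 0)) with hBεdef
      set Bε' : ℝ → ℝ := fun s => (Lf + Lg + Lh) * Real.exp (K * (s - t 0)) * z0
        + ε * (Real.exp (K * (s - t 0)) * K) with hBε'def
      have hBεderiv : ∀ s, HasDerivAt Bε (Bε' s) s := by
        intro s
        have h1 : HasDerivAt (fun s : ℝ => K * (s - t 0)) K s := by
          simpa using ((hasDerivAt_id s).sub_const (t 0)).const_mul K
        have hexp : HasDerivAt (fun s => Real.exp (K * (s - t 0)))
            (Real.exp (K * (s - t 0)) * K) s := h1.exp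
        have hB1 := ((hexp.sub_const 1).const_mul ((Lf + Lg + Lh) / K)).mul_const z0
        have heqd : (Lf + Lg + Lh) / K * (Real.exp (K * (s - t 0)) * K) * z0
            = (Lf + Lg + Lh) * Real.exp (K * (s - t 0)) * z0 := by
          field_simp
        rw [heqd] at hB1
        exact hB1.add (hexp.const_mul ε)
      have bound : ∀ s ∈ Set.Ico a b, ‖w s‖ = Bε s → ‖D s‖ < Bε' s := by
        intro s hs hseq
        have hst0 : t 0 ≤ s := ht0a.trans hs.1
        have hseq' : ‖x s - x (t 0)‖ = Bε s := hseq
        have h1 : ‖x s - xb‖ ≤ Bε s + z0 := by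
          calc ‖x s - xb‖ = ‖(x s - x (t 0)) + (x (t 0) - xb)‖ := by
                rw [sub_add_sub_cancel]
            _ ≤ ‖x s - x (t 0)‖ + ‖x (t 0) - xb‖ := norm_add_le _ _
            _ = Bε s + z0 := by rw [hseq']
        have h2 : ‖x a - xb‖ ≤ B a + z0 := by
          calc ‖x a - xb‖ = ‖(x a - x (t 0)) + (x (t 0) - xb)‖ := by
                rw [sub_add_sub_cancel]
            _ ≤ ‖x a - x (t 0)‖ + ‖x (t 0) - xb‖ := norm_add_le _ _
            _ ≤ B a + z0 := by gcongr
        have h3 : ‖D s‖ ≤ Lf * (Bε s + z0) + Lg * (B a + z0) + Lh * z0 := by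
          refine (hnorm3 (x s) (x a)).trans ?_
          gcongr
        have hBas : B a ≤ B s := hBmono a s hs.1
        have key1 : Lg * B a ≤ Lg * B s := mul_le_mul_of_nonneg_left hBas hLg.le
        have key2 : 0 < Lg * (ε * Real.exp (K * (s - t 0))) := by positivity
        have hKB := hBode s
        refine lt_of_le_of_lt h3 ?_
        have e1 : Bε s = B s + ε * Real.exp (K * (s - t 0)) := rfl
        have e2 : Bε' s = (Lf + Lg + Lh) * Real.exp (K * (s - t 0)) * z0
            + ε * (Real.exp (K * (s - t 0)) * K) := rfl
        rw [e1, e2, ← hKB, hKdef]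
        rw [hKdef] at key2
        nlinarith [key1, key2]
      have hBεa : ‖w a‖ ≤ Bε a := by
        have hp : (0:ℝ) < ε * Real.exp (K * (a - t 0)) := by positivity
        have hle : B a ≤ Bε a := by
          have : Bε a = B a + ε * Real.exp (K * (a - t 0)) := rfl
          linarith
        exact le_trans hBa hle
      exact image_norm_le_of_norm_deriv_right_lt_deriv_boundary hwc hw' hBεa hBεderiv bound hu
    -- let ε → 0
    have hexppos : (0:ℝ) < Real.exp (K * (u - t 0)) := Real.exp_pos _
    refine le_of_forall_pos_le_add ?_
    intro δ hδ
    have hh2 := hε (δ / Real.exp (K * (u - t 0))) (by positivity)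
    rwa [div_mul_cancel₀ _ hexppos.ne'] at hh2
  -- monotonicity of the breakpoints
  have tmono : ∀ i j : ℕ, i ≤ j → j ≤ k → t i ≤ t j := by
    intro i j hij hjk
    induction j, hij using Nat.le_induction with
    | base => exact le_refl _
    | succ m him ih =>
        exact (ih (Nat.le_of_succ_le hjk)).trans (hmono m hjk).le
  -- main induction over the intervals
  have main : ∀ j, j ≤ k → ∀ u ∈ Set.Icc (t 0) (t j), ‖x u - x (t 0)‖ ≤ B u := by
    intro j
    induction j with
    | zero =>
        intro _ u hu
        have hu0 : u = t 0 := le_antisymm hu.2 hu.1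
        simp [hu0, hBt0]
    | succ j ih =>
        intro hjk u hu
        have hjk' : j ≤ k := Nat.le_of_succ_le hjk
        have hjlt : j < k := hjk
        rcases le_or_gt u (t j) with hcase | hcase
        · exact ih hjk' u ⟨hu.1, hcase⟩
        · exact step (t j) (t (j+1)) (tmono 0 j (Nat.zero_le _) hjk') (hmono j hjlt)
            ((tmono (j+1) k hjk le_rfl).trans hkT)
            (ih hjk' (t j) ⟨tmono 0 j (Nat.zero_le _) hjk', le_refl _⟩)
            (hode j hjlt) u ⟨hcase.le, hu.2⟩
  intro u hu
  rcases le_or_gt u (t k) with hcase | hcase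
  · exact main k le_rfl u ⟨hu.1, hcase⟩
  · exact step (t k) T (tmono 0 k (Nat.zero_le _) le_rfl)
      (lt_of_lt_of_le hcase hu.2) le_rfl
      (main k le_rfl (t k) ⟨tmono 0 k (Nat.zero_le _) le_rfl, le_refl _⟩)
      hodeLast u ⟨hcase.le, hu.2⟩
end

section
/- Let t_0 < t_1 < ... < t_k ≤ T, and let x : [t_0, T] → ℝ^n be continuous and differentiable on each open interval (t_j, t_{j+1}) for j = 0,...,k−1 and on (t_k, T), with ẋ(t) = f(x(t)) + g(x(t_j)) + h(x(t_0)) on (t_j, t_{j+1}) and ẋ(t) = f(x(t)) + g(x(t_k)) + h(x(t_0)) on (t_k, T). Set L := L_f + L_g + L_h. Let t ∈ [t_0, T] and assume L_f + L_g − L(e^{(L_f + L_g)(t − t_0)} − 1) > 0. Then both: ‖x(t_0) − x̄‖ ≤ (L_f + L_g) ‖x(t) − x̄‖ / [L_f + L_g − L(e^{(L_f + L_g)(t − t_0)} − 1)] and ‖x(t) − x(t_0)‖ ≤ L(e^{(L_f + L_g)(t − t_0)} − 1) ‖x(t) − x̄‖ / [L_f + L_g − L(e^{(L_f + L_g)(t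 − t_0)} − 1)]. -/
open Set Real Filter Topology

lemma gronwall_open {E : Type*} [NormedAddCommGroup E] [NormedSpace ℝ E]
    {w w' : ℝ → E} {K δ ε : ℝ} (hK : 0 < K) {a b : ℝ}
    (hw : ContinuousOn w (Set.Icc a b))
    (hw' : ∀ s ∈ Set.Ioo a b, HasDerivAt w (w' s) s)
    (ha : ‖w a‖ ≤ δ)
    (bound : ∀ s ∈ Set.Ioo a b, ‖w' s‖ ≤ K * ‖w s‖ + ε) :
    ∀ s ∈ Set.Icc a b, ‖w s‖ ≤ δ * Real.exp (K * (s - a)) +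
      ε / K * (Real.exp (K * (s - a)) - 1) := by
  intro s hs
  rcases eq_or_lt_of_le hs.1 with rfl | has
  · simp only [sub_self, mul_zero, Real.exp_zero, mul_one]
    simpa using ha
  · have key : ∀ a' ∈ Set.Ioo a s, ‖w s‖ ≤ ‖w a'‖ * Real.exp (K * (s - a')) +
        ε / K * (Real.exp (K * (s - a')) - 1) := by
      intro a' ha'
      have hsub : Set.Icc a' s ⊆ Set.Icc a b :=
        Set.Icc_subset_Icc ha'.1.le hs.2
      have := norm_le_gronwallBound_of_norm_deriv_right_le (f := w) (f' := w')
        (δ := ‖w a'‖) (K := K) (ε := ε) (a := a') (b := s)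
        (hw.mono hsub)
        (fun r hr => (hw' r ⟨lt_of_lt_of_le ha'.1 hr.1, lt_of_lt_of_le hr.2 hs.2⟩).hasDerivWithinAt)
        le_rfl
        (fun r hr => bound r ⟨lt_of_lt_of_le ha'.1 hr.1, lt_of_lt_of_le hr.2 hs.2⟩)
        s ⟨ha'.2.le, le_rfl⟩
      rwa [gronwallBound_of_K_ne_0 hK.ne'] at this
    have hne : (𝓝[Set.Ioo a s] a).NeBot := by
      apply mem_closure_iff_nhdsWithin_neBot.mp
      rw [closure_Ioo has.ne]
      exact ⟨le_rfl, has.le⟩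
    have hwt : Filter.Tendsto (fun a' => ‖w a'‖ * Real.exp (K * (s - a')) +
        ε / K * (Real.exp (K * (s - a')) - 1)) (𝓝[Set.Ioo a s] a)
        (𝓝 (‖w a‖ * Real.exp (K * (s - a)) + ε / K * (Real.exp (K * (s - a)) - 1))) := by
      have h1 : Filter.Tendsto w (𝓝[Set.Ioo a s] a) (𝓝 (w a)) :=
        (hw a ⟨le_rfl, has.le.trans hs.2⟩).tendsto.mono_left
          (nhdsWithin_mono a (fun r hr => ⟨hr.1.le, hr.2.le.trans hs.2⟩))
      have h2 : Filter.Tendsto (fun a' : ℝ => Real.exp (K * (s - a'))) (𝓝[Set.Ioo a s] a)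
          (𝓝 (Real.exp (K * (s - a)))) :=
        ((Real.continuous_exp.comp (by continuity)).tendsto a).mono_left nhdsWithin_le_nhds
      exact (h1.norm.mul h2).add ((tendsto_const_nhds).mul (h2.sub tendsto_const_nhds))
    have hle := ge_of_tendsto hwt (Filter.eventually_of_mem self_mem_nhdsWithin
      (fun a' ha' => key a' ha'))
    have hexp : 0 < Real.exp (K * (s - a)) := Real.exp_pos _
    nlinarith [mul_le_mul_of_nonneg_right ha hexp.le]

lemma key_ineq {Lf Lg Lh c ya σ τ : ℝ} (hLf : 0 < Lf) (hLg : 0 < Lg) (hLh : 0 < Lh)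
    (hc : 0 ≤ c) (hσ : 0 ≤ σ) (hτ : 0 ≤ τ)
    (hbd : ya ≤ (Lf + Lg + Lh) * c / (Lf + Lg) * (Real.exp ((Lf + Lg) * σ) - 1)) :
    ya * Real.exp (Lf * τ) + (Lg * ya + (Lf + Lg + Lh) * c) / Lf * (Real.exp (Lf * τ) - 1)
      ≤ (Lf + Lg + Lh) * c / (Lf + Lg) * (Real.exp ((Lf + Lg) * σ + (Lf + Lg) * τ) - 1) := by
  have hD : (0:ℝ) < Lf + Lg := by linarith
  set A := Real.exp ((Lf + Lg) * σ) with hA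
  set B := Real.exp (Lf * τ) with hB
  set C := Real.exp (Lg * τ) with hC
  have hABC : Real.exp ((Lf + Lg) * σ + (Lf + Lg) * τ) = A * B * C := by
    rw [hA, hB, hC, ← Real.exp_add, ← Real.exp_add]; ring_nf
  have hA1 : 1 ≤ A := Real.one_le_exp (by positivity)
  have hB1 : 1 ≤ B := Real.one_le_exp (by positivity)
  have hBpos : 0 < B := Real.exp_pos _
  have hC1 : 1 + Lg * τ ≤ C := by
    have := Real.add_one_le_exp (Lg * τ); linarith
  have hB2 : B - 1 ≤ Lf * τ * B := by
    have h1 : 1 - Lf * τ ≤ Real.exp (-(Lf * τ)) := by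
      have := Real.add_one_le_exp (-(Lf * τ)); linarith
    have h2 : Real.exp (-(Lf * τ)) * B = 1 := by
      rw [hB, ← Real.exp_add]; simp
    nlinarith
  have hkey : Lg * (B - 1) ≤ Lf * (B * (C - 1)) := by
    nlinarith [mul_le_mul_of_nonneg_left hB2 hLg.le,
      mul_le_mul_of_nonneg_left hC1 (mul_nonneg hLf.le hBpos.le)]
  rw [div_mul_eq_mul_div, le_div_iff₀ hD] at hbd
  rw [hABC]
  have hlhs : ya * B + (Lg * ya + (Lf + Lg + Lh) * c) / Lf * (B - 1)
      = (Lf * (ya * B) + (Lg * ya + (Lf + Lg + Lh) * c) * (B - 1)) / Lf := by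
    field_simp
  rw [hlhs, div_mul_eq_mul_div, div_le_div_iff₀ hLf hD]
  have hcoef : 0 ≤ Lf * B + Lg * (B - 1) := by nlinarith
  have h1 := mul_le_mul_of_nonneg_right hbd hcoef
  have e1 : 0 ≤ c * A * (Lf * (B * (C - 1)) - Lg * (B - 1)) :=
    mul_nonneg (mul_nonneg hc (Real.exp_pos _).le) (by linarith)
  nlinarith [e1, h1]

/-- Bounds relating `‖x(t₀) − x̄‖` and `‖x(t) − x(t₀)‖` to `‖x(t) − x̄‖` for
the piecewise dynamics, valid when
`L_f + L_g − L(e^{(L_f+L_g)(t−t₀)} − 1) > 0` with `L = L_f + L_g + L_h`. -/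
theorem state_deviation_bound_outer_loop_implicit
    {n : ℕ} (f g h : EuclideanSpace ℝ (Fin n) → EuclideanSpace ℝ (Fin n))
    (Lf Lg Lh : ℝ) (hLf : 0 < Lf) (hLg : 0 < Lg) (hLh : 0 < Lh)
    (hf : ∀ a b, ‖f a - f b‖ ≤ Lf * ‖a - b‖)
    (hg : ∀ a b, ‖g a - g b‖ ≤ Lg * ‖a - b‖)
    (hh : ∀ a b, ‖h a - h b‖ ≤ Lh * ‖a - b‖)
    (xb : EuclideanSpace ℝ (Fin n)) (heq : f xb + g xb + h xb = 0)
    (k : ℕ) (t : ℕ → ℝ) (T : ℝ)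
    (hmono : ∀ j < k, t j < t (j + 1)) (hkT : t k ≤ T)
    (x : ℝ → EuclideanSpace ℝ (Fin n))
    (hcont : ContinuousOn x (Set.Icc (t 0) T))
    (hode : ∀ j < k, ∀ s ∈ Set.Ioo (t j) (t (j + 1)),
      HasDerivAt x (f (x s) + g (x (t j)) + h (x (t 0))) s)
    (hodeLast : ∀ s ∈ Set.Ioo (t k) T,
      HasDerivAt x (f (x s) + g (x (t k)) + h (x (t 0))) s)
    (u : ℝ) (hu : u ∈ Set.Icc (t 0) T)
    (hden : 0 < Lf + Lg - (Lf + Lg + Lh) * (Real.exp ((Lf + Lg) * (u - t 0)) - 1)) :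
    ‖x (t 0) - xb‖ ≤
      (Lf + Lg) * ‖x u - xb‖
        / (Lf + Lg - (Lf + Lg + Lh) * (Real.exp ((Lf + Lg) * (u - t 0)) - 1)) ∧
    ‖x u - x (t 0)‖ ≤
      (Lf + Lg + Lh) * (Real.exp ((Lf + Lg) * (u - t 0)) - 1) * ‖x u - xb‖
        / (Lf + Lg - (Lf + Lg + Lh) * (Real.exp ((Lf + Lg) * (u - t 0)) - 1)) := by
  have hD : (0:ℝ) < Lf + Lg := by linarith
  set c : ℝ := ‖x (t 0) - xb‖ with hc_def
  have hc : 0 ≤ c := norm_nonneg _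
  set φ : ℝ → ℝ := fun s =>
    (Lf + Lg + Lh) * c / (Lf + Lg) * (Real.exp ((Lf + Lg) * (s - t 0)) - 1) with hφ_def
  -- monotonicity of partition points
  have tmono : ∀ j ≤ k, ∀ i ≤ j, t i ≤ t j := by
    intro j
    induction j with
    | zero => intro _ i hi; interval_cases i; exact le_rfl
    | succ m ih =>
      intro hm i hi
      rcases Nat.lt_succ_iff_lt_or_eq.mp (Nat.lt_succ_of_le hi) with hlt | rfl
      · exact le_trans (ih (Nat.le_of_succ_le hm) i (Nat.lt_succ_iff.mp hlt))
          (hmono m (Nat.lt_of_succ_le hm)).le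
      · exact le_rfl
  have ht0le : ∀ j ≤ k, t 0 ≤ t j := fun j hj => tmono j hj 0 (Nat.zero_le _)
  have htjT : ∀ j ≤ k, t j ≤ T := fun j hj => le_trans (tmono k le_rfl j hj) hkT
  -- the per-interval step
  have step : ∀ a b : ℝ, t 0 ≤ a → a ≤ b → b ≤ T →
      (∀ s ∈ Set.Ioo a b, HasDerivAt x (f (x s) + g (x a) + h (x (t 0))) s) →
      ‖x a - x (t 0)‖ ≤ φ a → ∀ s ∈ Set.Icc a b, ‖x s - x (t 0)‖ ≤ φ s := by
    intro a b hta hab hbT hd hφa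
    intro s hs
    have hIcc : Set.Icc a b ⊆ Set.Icc (t 0) T := Set.Icc_subset_Icc hta hbT
    have hwcont : ContinuousOn (fun r => x r - x (t 0)) (Set.Icc a b) :=
      (hcont.mono hIcc).sub continuousOn_const
    have hw' : ∀ r ∈ Set.Ioo a b,
        HasDerivAt (fun r => x r - x (t 0)) (f (x r) + g (x a) + h (x (t 0))) r :=
      fun r hr => (hd r hr).sub_const _
    have hbound : ∀ r ∈ Set.Ioo a b,
        ‖f (x r) + g (x a) + h (x (t 0))‖ ≤
          Lf * ‖x r - x (t 0)‖ + (Lg * ‖x a - x (t 0)‖ + (Lf + Lg + Lh) * c) := by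
      intro r _
      have hrw : f (x r) + g (x a) + h (x (t 0)) =
          (f (x r) - f xb) + (g (x a) - g xb) + (h (x (t 0)) - h xb) := by
        rw [← sub_zero (f (x r) + g (x a) + h (x (t 0))), ← heq]; abel
      rw [hrw]
      calc ‖(f (x r) - f xb) + (g (x a) - g xb) + (h (x (t 0)) - h xb)‖
          ≤ ‖f (x r) - f xb‖ + ‖g (x a) - g xb‖ + ‖h (x (t 0)) - h xb‖ := by
            exact le_trans (norm_add_le _ _) (by gcongr; exact norm_add_le _ _)
        _ ≤ Lf * ‖x r - xb‖ + Lg * ‖x a - xb‖ + Lh * ‖x (t 0) - xb‖ :=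
            add_le_add (add_le_add (hf _ _) (hg _ _)) (hh _ _)
        _ ≤ Lf * (‖x r - x (t 0)‖ + c) + Lg * (‖x a - x (t 0)‖ + c) + Lh * c := by
            gcongr
            · calc ‖x r - xb‖ ≤ ‖x r - x (t 0)‖ + ‖x (t 0) - xb‖ := norm_sub_le_norm_sub_add_norm_sub _ _ _
                _ = ‖x r - x (t 0)‖ + c := rfl
            · calc ‖x a - xb‖ ≤ ‖x a - x (t 0)‖ + ‖x (t 0) - xb‖ := norm_sub_le_norm_sub_add_norm_sub _ _ _
                _ = ‖x a - x (t 0)‖ + c := rfl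
        _ = Lf * ‖x r - x (t 0)‖ + (Lg * ‖x a - x (t 0)‖ + (Lf + Lg + Lh) * c) := by ring
    have hg1 := gronwall_open (w := fun r => x r - x (t 0))
      (w' := fun r => f (x r) + g (x a) + h (x (t 0)))
      hLf hwcont hw' le_rfl hbound s hs
    have halg := key_ineq (c := c) (ya := ‖x a - x (t 0)‖) (σ := a - t 0) (τ := s - a)
      hLf hLg hLh hc (by linarith) (by linarith [hs.1]) hφa
    have harg : (Lf + Lg) * (a - t 0) + (Lf + Lg) * (s - a) = (Lf + Lg) * (s - t 0) := by ring
    rw [harg] at halg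
    exact le_trans hg1 halg
  -- inductive claim up to t j
  have claim : ∀ j ≤ k, ∀ s ∈ Set.Icc (t 0) (t j), ‖x s - x (t 0)‖ ≤ φ s := by
    intro j
    induction j with
    | zero =>
      intro _ s hs
      have : s = t 0 := le_antisymm hs.2 hs.1
      subst this
      simp [hφ_def]
    | succ m ih =>
      intro hm s hs
      have hmk : m < k := Nat.lt_of_succ_le hm
      by_cases hsm : s ≤ t m
      · exact ih hmk.le s ⟨hs.1, hsm⟩
      · exact step (t m) (t (m + 1)) (ht0le m hmk.le) (hmono m hmk).le
          (htjT (m + 1) hm) (hode m hmk)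
          (ih hmk.le (t m) ⟨ht0le m hmk.le, le_rfl⟩)
          s ⟨(not_le.mp hsm).le, hs.2⟩
  -- claim on all of [t 0, T]
  have claimT : ∀ s ∈ Set.Icc (t 0) T, ‖x s - x (t 0)‖ ≤ φ s := by
    intro s hs
    by_cases h1 : s ≤ t k
    · exact claim k le_rfl s ⟨hs.1, h1⟩
    · exact step (t k) T (ht0le k le_rfl) hkT le_rfl hodeLast
        (claim k le_rfl (t k) ⟨ht0le k le_rfl, le_rfl⟩)
        s ⟨(not_le.mp h1).le, hs.2⟩
  have hyu : ‖x u - x (t 0)‖ ≤ φ u := claimT u hu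
  set E : ℝ := Real.exp ((Lf + Lg) * (u - t 0)) - 1 with hE_def
  have hE : 0 ≤ E := by
    have : (1:ℝ) ≤ Real.exp ((Lf + Lg) * (u - t 0)) :=
      Real.one_le_exp (by nlinarith [hu.1])
    linarith
  set N : ℝ := ‖x u - xb‖ with hN_def
  have hN : 0 ≤ N := norm_nonneg _
  have htri : c ≤ N + ‖x u - x (t 0)‖ := by
    calc c = ‖x (t 0) - xb‖ := rfl
      _ ≤ ‖x (t 0) - x u‖ + ‖x u - xb‖ := norm_sub_le_norm_sub_add_norm_sub _ _ _
      _ = N + ‖x u - x (t 0)‖ := by rw [norm_sub_rev]; ring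
  have hyu' : ‖x u - x (t 0)‖ * (Lf + Lg) ≤ (Lf + Lg + Lh) * c * E := by
    have : φ u = (Lf + Lg + Lh) * c * E / (Lf + Lg) := by
      simp only [hφ_def, hE_def]; rw [div_mul_eq_mul_div]
    rw [this, le_div_iff₀ hD] at hyu
    linarith [hyu]
  have hmain : c * (Lf + Lg - (Lf + Lg + Lh) * E) ≤ (Lf + Lg) * N := by
    nlinarith [htri, hyu', norm_nonneg (x u - x (t 0))]
  constructor
  · rw [le_div_iff₀ hden]
    linarith [hmain]
  · rw [le_div_iff₀ hden]
    have hLE : (0:ℝ) ≤ (Lf + Lg + Lh) * E := mul_nonneg (by linarith) hE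
    nlinarith [mul_le_mul_of_nonneg_right hyu' hden.le,
      mul_le_mul_of_nonneg_left hmain hLE, hD, hN, norm_nonneg (x u - x (t 0))]
end

section
/- Let t_0 < t_1 < ... < t_k ≤ T, and let x : [t_0, T] → ℝ^n be continuous and differentiable on each open interval (t_j, t_{j+1}) for j = 0,...,k−1 and on (t_k, T), with ẋ(t) = f(x(t)) + g(x(t_j)) + h(x(t_0)) on (t_j, t_{j+1}) and ẋ(t) = f(x(t)) + g(x(t_k)) + h(x(t_0)) on (t_k, T). Set L := L_f + L_g + L_h, and let L_W > 0 and 0 < β < α. Define ξ̄ := (1/(L_f + L_g)) log(1 + β(L_f + L_g)/(L(L_W L_h + β))) and ζ̄ := (1/L_f) log(1 + L_f(α − β)/(L_g(L L_W + α) + (α − β)(L_f + L_g))). Then for every t ∈ [t_k, T] with t − t_k ≤ ζ̄ and t − t_0 ≤ ξ̄: ‖x(t) − x(t_k)‖ ≤ ((α − β)/(L_W L_g)) ‖x(t) − x̄‖. -/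
/-!
On each sampling interval `(t_j, t_{j+1})` the delayed arguments `x t_j` of `g` and `x t_0` of `h`
are frozen. Restarting Grönwall's inequality at every `t_j` (with `f` Lipschitz in the state and
`g` evaluated at the already bounded `x t_j`) never overshoots the bound
`C₀ / (L_f + L_g) · (exp ((L_f + L_g) (s - t_0)) - 1)` of the undelayed system, where
`C₀ = ‖f (x t_0) + g (x t_0) + h (x t_0)‖ ≤ L ‖x t_0 - x̄‖`; this only uses that the bound is
increasing and that `exp` is convex. With `t - t_0 ≤ ξ̄` it gives
`L_W L_h ‖x t - x t_0‖ ≤ β ‖x t - x̄‖`. On the last interval Grönwall with only `f` moving bounds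
`‖x t - x t_k‖` by `((L_f + L_g) ‖x t_k - x̄‖ + L_h ‖x t_0 - x̄‖) (exp (L_f (t - t_k)) - 1) / L_f`,
and `t - t_k ≤ ζ̄` together with the triangle inequality through `x t` closes the estimate.
-/

open Set Real

theorem monotoneOn_Iic_of_le_succ {α : Type*} [Preorder α] {t : ℕ → α} {m : ℕ}
    (ht : ∀ j < m, t j ≤ t (j + 1)) : MonotoneOn t (Iic m) :=
  monotoneOn_of_le_succ ordConnected_Iic fun j _ _ hj =>
    ht j (Nat.lt_of_succ_le (by simpa [Order.succ_eq_add_one] using hj))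

theorem norm_add_add_le_of_lipschitz {E F : Type*} [SeminormedAddCommGroup E]
    [SeminormedAddCommGroup F] {f g h : E → F} {Lf Lg Lh : ℝ}
    (hf : ∀ a b, ‖f a - f b‖ ≤ Lf * ‖a - b‖) (hg : ∀ a b, ‖g a - g b‖ ≤ Lg * ‖a - b‖)
    (hh : ∀ a b, ‖h a - h b‖ ≤ Lh * ‖a - b‖) (p w z p' w' z' : E) :
    ‖f p + g w + h z‖
      ≤ Lf * ‖p - p'‖ + Lg * ‖w - w'‖ + Lh * ‖z - z'‖ + ‖f p' + g w' + h z'‖ := by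
  have hsplit : f p + g w + h z
      = (f p - f p') + (g w - g w') + (h z - h z') + (f p' + g w' + h z') := by abel
  rw [hsplit]
  linarith [norm_add₄_le (a := f p - f p') (b := g w - g w') (c := h z - h z')
    (d := f p' + g w' + h z'), hf p p', hg w w', hh z z']

theorem add_mul_exp_mul_le {K₁ K₂ : ℝ} (hK₁ : 0 < K₁) (hK₂ : 0 ≤ K₂) (τ : ℝ) :
    (K₁ + K₂) * exp (K₁ * τ) ≤ K₁ * exp ((K₁ + K₂) * τ) + K₂ := by
  have hK : 0 < K₁ + K₂ := by positivity
  have hconv := convexOn_exp.2 (mem_univ ((K₁ + K₂) * τ)) (mem_univ 0)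
    (div_nonneg hK₁.le hK.le) (div_nonneg hK₂ hK.le) (by field_simp)
  have hmid : K₁ / (K₁ + K₂) * ((K₁ + K₂) * τ) + K₂ / (K₁ + K₂) * 0 = K₁ * τ := by
    rw [mul_zero, add_zero]; field_simp
  simp only [smul_eq_mul, hmid, exp_zero, mul_one] at hconv
  calc (K₁ + K₂) * exp (K₁ * τ)
      ≤ (K₁ + K₂) * (K₁ / (K₁ + K₂) * exp ((K₁ + K₂) * τ) + K₂ / (K₁ + K₂)) := by gcongr
    _ = K₁ * exp ((K₁ + K₂) * τ) + K₂ := by field_simp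

theorem gronwallBound_delay_le {K₁ K₂ C : ℝ} (hK₁ : 0 < K₁) (hK₂ : 0 ≤ K₂) (hC : 0 ≤ C)
    (σ τ : ℝ) :
    gronwallBound (gronwallBound 0 (K₁ + K₂) C σ) K₁ (K₂ * gronwallBound 0 (K₁ + K₂) C σ + C) τ
      ≤ gronwallBound 0 (K₁ + K₂) C (σ + τ) := by
  have hK : 0 < K₁ + K₂ := by positivity
  simp only [gronwallBound_of_K_ne_0 hK₁.ne', gronwallBound_of_K_ne_0 hK.ne', zero_mul, zero_add]
  have hgap : C / (K₁ + K₂) * (exp ((K₁ + K₂) * (σ + τ)) - 1)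
      - ((C / (K₁ + K₂) * (exp ((K₁ + K₂) * σ) - 1)) * exp (K₁ * τ)
        + (K₂ * (C / (K₁ + K₂) * (exp ((K₁ + K₂) * σ) - 1)) + C) / K₁ * (exp (K₁ * τ) - 1))
      = C * exp ((K₁ + K₂) * σ) / (K₁ * (K₁ + K₂))
        * (K₁ * exp ((K₁ + K₂) * τ) + K₂ - (K₁ + K₂) * exp (K₁ * τ)) := by
    rw [mul_add, exp_add]; field_simp; ring
  rw [← sub_nonneg, hgap]
  exact mul_nonneg (by positivity) (sub_nonneg.2 (add_mul_exp_mul_le hK₁ hK₂ τ))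

theorem gronwallBound_zero_le_of_le_log {K ε r τ : ℝ} (hK : 0 < K) (hε : 0 ≤ ε) (hr : 0 < 1 + r)
    (hτ : τ ≤ 1 / K * log (1 + r)) : gronwallBound 0 K ε τ ≤ ε / K * r := by
  simp only [gronwallBound_of_K_ne_0 hK.ne', zero_mul, zero_add]
  have hexp : exp (K * τ) ≤ 1 + r := by
    rw [← exp_log hr, exp_le_exp, ← le_div_iff₀' hK, ← one_div_mul_eq_div]
    exact hτ
  gcongr
  linarith

section Gronwall

variable {E : Type*} [NormedAddCommGroup E] [NormedSpace ℝ E]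

theorem continuous_gronwallBound (K ε : ℝ) :
    Continuous fun p : ℝ × ℝ => gronwallBound p.1 K ε p.2 := by
  unfold gronwallBound
  split_ifs <;> fun_prop

theorem gronwallBound_le_gronwallBound_of_le {δ δ' : ℝ} (K ε x : ℝ) (hδ : δ ≤ δ') :
    gronwallBound δ K ε x ≤ gronwallBound δ' K ε x := by
  unfold gronwallBound
  split_ifs
  · linarith
  · gcongr

theorem norm_le_gronwallBound_of_hasDerivAt_Ioo {y y' : ℝ → E} {δ K ε a b : ℝ}
    (hy : ContinuousOn y (Icc a b)) (hy' : ∀ s ∈ Ioo a b, HasDerivAt y (y' s) s)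
    (ha : ‖y a‖ ≤ δ) (bound : ∀ s ∈ Ioo a b, ‖y' s‖ ≤ K * ‖y s‖ + ε) :
    ∀ s ∈ Icc a b, ‖y s‖ ≤ gronwallBound δ K ε (s - a) := by
  rintro s ⟨has, hsb⟩
  refine le_trans ?_ (gronwallBound_le_gronwallBound_of_le K ε (s - a) ha)
  rcases has.eq_or_lt with rfl | has
  · rw [sub_self, gronwallBound_x0]
  -- Grönwall from every `a' ∈ (a, s)`, where the right derivative exists, then let `a' → a`.
  have hfrom : ∀ a' ∈ Ioo a s, ‖y s‖ ≤ gronwallBound ‖y a'‖ K ε (s - a') := fun a' ha' =>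
    norm_le_gronwallBound_of_norm_deriv_right_le (hy.mono (Icc_subset_Icc ha'.1.le hsb))
      (fun r hr => (hy' r ⟨ha'.1.trans_le hr.1, hr.2.trans_le hsb⟩).hasDerivWithinAt) le_rfl
      (fun r hr => bound r ⟨ha'.1.trans_le hr.1, hr.2.trans_le hsb⟩) s ⟨ha'.2.le, le_rfl⟩
  have hya : ContinuousWithinAt y (Ioo a s) a :=
    (hy a ⟨le_rfl, has.le.trans hsb⟩).mono (Ioo_subset_Icc_self.trans (Icc_subset_Icc le_rfl hsb))
  have ha_mem : a ∈ closure (Ioo a s) := by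
    rw [closure_Ioo has.ne]; exact left_mem_Icc.2 has.le
  refine continuousWithinAt_const.closure_le
    (g := fun a' => gronwallBound ‖y a'‖ K ε (s - a')) ha_mem ?_ hfrom
  exact (continuous_gronwallBound K ε).continuousAt.comp_continuousWithinAt
    (hya.norm.prodMk (continuousWithinAt_const.sub continuousWithinAt_id))

theorem norm_le_gronwallBound_of_delay_step {y y' : ℝ → E} {K₁ K₂ C t₀ a b : ℝ}
    (hK₁ : 0 < K₁) (hK₂ : 0 ≤ K₂) (hC : 0 ≤ C)
    (hy : ContinuousOn y (Icc a b)) (hy' : ∀ s ∈ Ioo a b, HasDerivAt y (y' s) s)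
    (ha : ‖y a‖ ≤ gronwallBound 0 (K₁ + K₂) C (a - t₀))
    (bound : ∀ s ∈ Ioo a b, ‖y' s‖ ≤ K₁ * ‖y s‖ + K₂ * ‖y a‖ + C) :
    ∀ s ∈ Icc a b, ‖y s‖ ≤ gronwallBound 0 (K₁ + K₂) C (s - t₀) := by
  intro s hs
  set φ := gronwallBound 0 (K₁ + K₂) C
  have hbound : ∀ r ∈ Ioo a b, ‖y' r‖ ≤ K₁ * ‖y r‖ + (K₂ * φ (a - t₀) + C) := fun r hr => by
    linarith [bound r hr, mul_le_mul_of_nonneg_left ha hK₂]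
  calc ‖y s‖ ≤ gronwallBound (φ (a - t₀)) K₁ (K₂ * φ (a - t₀) + C) (s - a) :=
        norm_le_gronwallBound_of_hasDerivAt_Ioo hy hy' ha hbound s hs
    _ ≤ φ (a - t₀ + (s - a)) := gronwallBound_delay_le hK₁ hK₂ hC _ _
    _ = φ (s - t₀) := by rw [sub_add_sub_cancel']

theorem norm_le_gronwallBound_of_piecewise_delay {y : ℝ → E} {y' : ℕ → ℝ → E}
    {K₁ K₂ C b : ℝ} {t : ℕ → ℝ} {m : ℕ} (hK₁ : 0 < K₁) (hK₂ : 0 ≤ K₂) (hC : 0 ≤ C)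
    (ht : ∀ j < m, t j ≤ t (j + 1)) (hmb : t m ≤ b)
    (hy : ContinuousOn y (Icc (t 0) b)) (hy0 : y (t 0) = 0)
    (hpiece : ∀ j < m, ∀ s ∈ Ioo (t j) (t (j + 1)), HasDerivAt y (y' j s) s)
    (hlast : ∀ s ∈ Ioo (t m) b, HasDerivAt y (y' m s) s)
    (bound : ∀ j ≤ m, ∀ s, ‖y' j s‖ ≤ K₁ * ‖y s‖ + K₂ * ‖y (t j)‖ + C) :
    ∀ s ∈ Icc (t 0) b, ‖y s‖ ≤ gronwallBound 0 (K₁ + K₂) C (s - t 0) := by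
  have hmono := monotoneOn_Iic_of_le_succ ht
  have ht0 : ∀ j ≤ m, t 0 ≤ t j := fun j hj => hmono (Nat.zero_le m) hj (Nat.zero_le j)
  have hinit : ∀ j ≤ m, ∀ s ∈ Icc (t 0) (t j),
      ‖y s‖ ≤ gronwallBound 0 (K₁ + K₂) C (s - t 0) := by
    intro j
    induction j with
    | zero =>
      intro _ s hs
      rw [le_antisymm hs.2 hs.1, hy0, norm_zero, sub_self, gronwallBound_x0]
    | succ j ih =>
      intro hj s hs
      rcases le_total s (t j) with hsj | hsj
      · exact ih (by omega) s ⟨hs.1, hsj⟩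
      · have hjb : t (j + 1) ≤ b := (hmono hj (le_refl m) hj).trans hmb
        exact norm_le_gronwallBound_of_delay_step hK₁ hK₂ hC
          (hy.mono (Icc_subset_Icc (ht0 j (by omega)) hjb)) (hpiece j (by omega))
          (ih (by omega) (t j) ⟨ht0 j (by omega), le_rfl⟩)
          (fun r _ => bound j (by omega) r) s ⟨hsj, hs.2⟩
  intro s hs
  rcases le_total s (t m) with hsm | hsm
  · exact hinit m le_rfl s ⟨hs.1, hsm⟩
  · exact norm_le_gronwallBound_of_delay_step hK₁ hK₂ hC
      (hy.mono (Icc_subset_Icc (ht0 m le_rfl) le_rfl)) hlast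
      (hinit m le_rfl (t m) ⟨ht0 m le_rfl, le_rfl⟩) (fun r _ => bound m le_rfl r) s ⟨hsm, hs.2⟩

theorem norm_sub_initial_le_gronwallBound {f g h : E → E} {Lf Lg : ℝ} {x : ℝ → E}
    {t : ℕ → ℝ} {k : ℕ} {b : ℝ} (hLf : 0 < Lf) (hLg : 0 ≤ Lg)
    (hf : ∀ a b, ‖f a - f b‖ ≤ Lf * ‖a - b‖) (hg : ∀ a b, ‖g a - g b‖ ≤ Lg * ‖a - b‖)
    (ht : ∀ j < k, t j ≤ t (j + 1)) (hkb : t k ≤ b) (hx : ContinuousOn x (Icc (t 0) b))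
    (hode : ∀ j < k, ∀ s ∈ Ioo (t j) (t (j + 1)),
      HasDerivAt x (f (x s) + g (x (t j)) + h (x (t 0))) s)
    (hodeLast : ∀ s ∈ Ioo (t k) b, HasDerivAt x (f (x s) + g (x (t k)) + h (x (t 0))) s) :
    ∀ s ∈ Icc (t 0) b, ‖x s - x (t 0)‖
      ≤ gronwallBound 0 (Lf + Lg) ‖f (x (t 0)) + g (x (t 0)) + h (x (t 0))‖ (s - t 0) := by
  set x₀ := x (t 0)
  have hfield : ∀ p w,
      ‖f p + g w + h x₀‖ ≤ Lf * ‖p - x₀‖ + Lg * ‖w - x₀‖ + ‖f x₀ + g x₀ + h x₀‖ := by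
    intro p w
    have hsplit : f p + g w + h x₀ = (f p - f x₀) + (g w - g x₀) + (f x₀ + g x₀ + h x₀) := by abel
    rw [hsplit]
    linarith [norm_add₃_le (a := f p - f x₀) (b := g w - g x₀) (c := f x₀ + g x₀ + h x₀),
      hf p x₀, hg w x₀]
  exact norm_le_gronwallBound_of_piecewise_delay (y := fun s => x s - x₀)
    (y' := fun j s => f (x s) + g (x (t j)) + h x₀) hLf hLg (norm_nonneg _) ht hkb
    (hx.sub continuousOn_const) (sub_self _) (fun j hj s hs => (hode j hj s hs).sub_const _)
    (fun s hs => (hodeLast s hs).sub_const _) (fun j _ s => hfield (x s) (x (t j)))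

theorem norm_sub_last_le_gronwallBound {f g h : E → E} {Lf Lg Lh : ℝ} {x : ℝ → E} {x₀ xb : E}
    {a b : ℝ} (hf : ∀ a b, ‖f a - f b‖ ≤ Lf * ‖a - b‖) (hg : ∀ a b, ‖g a - g b‖ ≤ Lg * ‖a - b‖)
    (hh : ∀ a b, ‖h a - h b‖ ≤ Lh * ‖a - b‖) (heq : f xb + g xb + h xb = 0)
    (hx : ContinuousOn x (Icc a b))
    (hode : ∀ s ∈ Ioo a b, HasDerivAt x (f (x s) + g (x a) + h x₀) s) :
    ∀ s ∈ Icc a b, ‖x s - x a‖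
      ≤ gronwallBound 0 Lf ((Lf + Lg) * ‖x a - xb‖ + Lh * ‖x₀ - xb‖) (s - a) := by
  refine norm_le_gronwallBound_of_hasDerivAt_Ioo (hx.sub continuousOn_const)
    (fun s hs => (hode s hs).sub_const _) (by rw [sub_self, norm_zero]) fun s _ => ?_
  have hmove := norm_add_add_le_of_lipschitz hf hg hh (x s) (x a) x₀ (x a) (x a) x₀
  have hfreeze := norm_add_add_le_of_lipschitz hf hg hh (x a) (x a) x₀ xb xb xb
  simp only [sub_self, norm_zero, mul_zero, add_zero, heq] at hmove hfreeze
  linarith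

end Gronwall

theorem deviation_le_of_outer_inner_bounds {Lf Lg Lh LW α β C₀ P Q N N₀ Nₖ : ℝ}
    (hLf : 0 < Lf) (hLg : 0 < Lg) (hLh : 0 < Lh) (hLW : 0 < LW) (hβ : 0 < β) (hβα : β < α)
    (hN : 0 ≤ N) (hN₀ : N₀ ≤ Q + N) (hNₖ : Nₖ ≤ P + N)
    (hC₀ : C₀ ≤ Lf * N₀ + Lg * N₀ + Lh * N₀)
    (hQ : Q ≤ C₀ / (Lf + Lg) * (β * (Lf + Lg) / ((Lf + Lg + Lh) * (LW * Lh + β))))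
    (hP : P ≤ ((Lf + Lg) * Nₖ + Lh * N₀) / Lf
      * (Lf * (α - β) / (Lg * ((Lf + Lg + Lh) * LW + α) + (α - β) * (Lf + Lg)))) :
    P ≤ (α - β) / (LW * Lg) * N := by
  have hα : 0 < α := hβ.trans hβα
  have hαβ : 0 < α - β := sub_pos.2 hβα
  have hD : 0 < Lg * ((Lf + Lg + Lh) * LW + α) + (α - β) * (Lf + Lg) := by positivity
  have hQN₀ : Q * (LW * Lh + β) ≤ β * N₀ := by
    calc Q * (LW * Lh + β)
        ≤ C₀ / (Lf + Lg) * (β * (Lf + Lg) / ((Lf + Lg + Lh) * (LW * Lh + β)))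
          * (LW * Lh + β) := by gcongr
      _ = β * (C₀ / (Lf + Lg + Lh)) := by field_simp
      _ ≤ β * N₀ := by gcongr; rw [div_le_iff₀' (by positivity)]; linarith
  have hPNₖ : P * (Lg * ((Lf + Lg + Lh) * LW + α) + (α - β) * (Lf + Lg))
      ≤ (α - β) * ((Lf + Lg) * Nₖ + Lh * N₀) := by
    calc P * (Lg * ((Lf + Lg + Lh) * LW + α) + (α - β) * (Lf + Lg))
        ≤ ((Lf + Lg) * Nₖ + Lh * N₀) / Lf
          * (Lf * (α - β) / (Lg * ((Lf + Lg + Lh) * LW + α) + (α - β) * (Lf + Lg)))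
          * (Lg * ((Lf + Lg + Lh) * LW + α) + (α - β) * (Lf + Lg)) := by gcongr
      _ = (α - β) * ((Lf + Lg) * Nₖ + Lh * N₀) := by
          rw [mul_assoc, div_mul_cancel₀ _ hD.ne']; field_simp
  have hQN : LW * Lh * N₀ ≤ (LW * Lh + β) * N := by
    nlinarith [mul_le_mul_of_nonneg_left hN₀ (mul_pos hLW hLh).le,
      mul_le_mul_of_nonneg_left hN₀ hβ.le]
  have hPN : P * Lg * ((Lf + Lg + Lh) * LW + α) ≤ (α - β) * ((Lf + Lg) * N + Lh * N₀) := by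
    nlinarith [mul_le_mul_of_nonneg_left hNₖ (mul_nonneg hαβ.le (add_pos hLf hLg).le)]
  rw [div_mul_eq_mul_div, le_div_iff₀ (mul_pos hLW hLg)]
  refine le_of_mul_le_mul_right ?_ (by positivity : 0 < (Lf + Lg + Lh) * LW + α)
  nlinarith [mul_le_mul_of_nonneg_left hQN hαβ.le, mul_le_mul_of_nonneg_left hPN hLW.le,
    mul_le_mul_of_nonneg_right hβα.le (mul_nonneg hαβ.le hN)]

theorem state_deviation_bound_inner_loop_zeta_general
    {n : ℕ} (f g h : EuclideanSpace ℝ (Fin n) → EuclideanSpace ℝ (Fin n))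
    (Lf Lg Lh : ℝ) (hLf : 0 < Lf) (hLg : 0 < Lg) (hLh : 0 < Lh)
    (hf : ∀ a b, ‖f a - f b‖ ≤ Lf * ‖a - b‖)
    (hg : ∀ a b, ‖g a - g b‖ ≤ Lg * ‖a - b‖)
    (hh : ∀ a b, ‖h a - h b‖ ≤ Lh * ‖a - b‖)
    (xb : EuclideanSpace ℝ (Fin n)) (heq : f xb + g xb + h xb = 0)
    (k : ℕ) (t : ℕ → ℝ) (T : ℝ)
    (hmono : ∀ j < k, t j < t (j + 1))
    (LW α β : ℝ) (hLW : 0 < LW) (hβ : 0 < β) (hβα : β < α)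
    (x : ℝ → EuclideanSpace ℝ (Fin n))
    (hcont : ContinuousOn x (Set.Icc (t 0) T))
    (hode : ∀ j < k, ∀ s ∈ Set.Ioo (t j) (t (j + 1)),
      HasDerivAt x (f (x s) + g (x (t j)) + h (x (t 0))) s)
    (hodeLast : ∀ s ∈ Set.Ioo (t k) T,
      HasDerivAt x (f (x s) + g (x (t k)) + h (x (t 0))) s)
    (u : ℝ) (hu : u ∈ Set.Icc (t k) T)
    (hζ : u - t k ≤ (1 / Lf)
        * Real.log (1 + Lf * (α - β)
            / (Lg * ((Lf + Lg + Lh) * LW + α) + (α - β) * (Lf + Lg))))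
    (hξ : u - t 0 ≤ (1 / (Lf + Lg))
        * Real.log (1 + β * (Lf + Lg) / ((Lf + Lg + Lh) * (LW * Lh + β)))) :
    ‖x u - x (t k)‖ ≤ ((α - β) / (LW * Lg)) * ‖x u - xb‖ := by
  have hα : 0 < α := hβ.trans hβα
  have hαβ : 0 < α - β := sub_pos.2 hβα
  have ht : ∀ j < k, t j ≤ t (j + 1) := fun j hj => (hmono j hj).le
  have ht0k : t 0 ≤ t k :=
    monotoneOn_Iic_of_le_succ ht (Nat.zero_le k) (mem_Iic.2 le_rfl) (Nat.zero_le k)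
  have hodeU : ∀ s ∈ Ioo (t k) u, HasDerivAt x (f (x s) + g (x (t k)) + h (x (t 0))) s :=
    fun s hs => hodeLast s ⟨hs.1, hs.2.trans_le hu.2⟩
  have hQ := (norm_sub_initial_le_gronwallBound hLf hLg.le hf hg ht hu.1
    (hcont.mono (Icc_subset_Icc le_rfl hu.2)) hode hodeU u ⟨ht0k.trans hu.1, le_rfl⟩).trans
    (gronwallBound_zero_le_of_le_log (add_pos hLf hLg) (norm_nonneg _) (by positivity) hξ)
  have hP := (norm_sub_last_le_gronwallBound hf hg hh heq
    (hcont.mono (Icc_subset_Icc ht0k hu.2)) hodeU u ⟨hu.1, le_rfl⟩).trans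
    (gronwallBound_zero_le_of_le_log hLf (by positivity) (by positivity) hζ)
  have hC₀ := norm_add_add_le_of_lipschitz hf hg hh (x (t 0)) (x (t 0)) (x (t 0)) xb xb xb
  rw [heq, norm_zero, add_zero] at hC₀
  exact deviation_le_of_outer_inner_bounds hLf hLg hLh hLW hβ hβα (norm_nonneg _)
    (by simpa only [dist_eq_norm] using dist_triangle_left (x (t 0)) xb (x u))
    (by simpa only [dist_eq_norm] using dist_triangle_left (x (t k)) xb (x u)) hC₀ hQ hP

/-- If the time since the last bid update satisfies `t − t_k ≤ ζ̄` and the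
time since the last market clearing satisfies `t − t₀ ≤ ξ̄`, where
`ξ̄ = (1/(L_f+L_g)) log(1 + β(L_f+L_g)/(L(L_W L_h + β)))`,
`ζ̄ = (1/L_f) log(1 + L_f(α−β)/(L_g(L L_W + α) + (α−β)(L_f+L_g)))` and
`L = L_f + L_g + L_h`, then `‖x(t) − x(t_k)‖ ≤ ((α−β)/(L_W L_g)) ‖x(t) − x̄‖`
along the piecewise dynamics. -/
theorem state_deviation_bound_inner_loop_zeta
    {n : ℕ} (f g h : EuclideanSpace ℝ (Fin n) → EuclideanSpace ℝ (Fin n))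
    (Lf Lg Lh : ℝ) (hLf : 0 < Lf) (hLg : 0 < Lg) (hLh : 0 < Lh)
    (hf : ∀ a b, ‖f a - f b‖ ≤ Lf * ‖a - b‖)
    (hg : ∀ a b, ‖g a - g b‖ ≤ Lg * ‖a - b‖)
    (hh : ∀ a b, ‖h a - h b‖ ≤ Lh * ‖a - b‖)
    (xb : EuclideanSpace ℝ (Fin n)) (heq : f xb + g xb + h xb = 0)
    (k : ℕ) (t : ℕ → ℝ) (T : ℝ)
    (hmono : ∀ j < k, t j < t (j + 1)) (hkT : t k ≤ T)
    (LW α β : ℝ) (hLW : 0 < LW) (hβ : 0 < β) (hβα : β < α)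
    (x : ℝ → EuclideanSpace ℝ (Fin n))
    (hcont : ContinuousOn x (Set.Icc (t 0) T))
    (hode : ∀ j < k, ∀ s ∈ Set.Ioo (t j) (t (j + 1)),
      HasDerivAt x (f (x s) + g (x (t j)) + h (x (t 0))) s)
    (hodeLast : ∀ s ∈ Set.Ioo (t k) T,
      HasDerivAt x (f (x s) + g (x (t k)) + h (x (t 0))) s)
    (u : ℝ) (hu : u ∈ Set.Icc (t k) T)
    (hζ : u - t k ≤ (1 / Lf)
        * Real.log (1 + Lf * (α - β)
            / (Lg * ((Lf + Lg + Lh) * LW + α) + (α - β) * (Lf + Lg))))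
    (hξ : u - t 0 ≤ (1 / (Lf + Lg))
        * Real.log (1 + β * (Lf + Lg) / ((Lf + Lg + Lh) * (LW * Lh + β)))) :
    ‖x u - x (t k)‖ ≤ ((α - β) / (LW * Lg)) * ‖x u - xb‖ :=
  state_deviation_bound_inner_loop_zeta_general f g h Lf Lg Lh hLf hLg hLh hf hg hh xb heq k t T
    hmono LW α β hLW hβ hβα x hcont hode hodeLast u hu hζ hξ
end

section
/- Let W : ℝ^n → ℝ be differentiable with ∇W globally Lipschitz with constant L_W > 0 and ∇W(x̄) = 0, set F := f + g + h, and let 0 < β < α. Let x ∈ ℝ^n satisfy (∇W(x))ᵀ F(x) ≤ −α ‖x − x̄‖², and let x_k, x_0 ∈ ℝ^n satisfy ‖x − x_k‖ ≤ ((α − β)/(L_W L_g)) ‖x − x̄‖ and ‖x − x_0‖ ≤ (β/(L_W L_h)) ‖x − x̄‖. Then (∇W(x))ᵀ ( F(x) + g(x_k) − g(x) + h(x_0) − h(x) ) ≤ 0. -/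
/-!
Since `∇W(x̄) = 0`, the Lipschitz bound on `∇W` gives `‖∇W(x)‖ ≤ L_W ‖x − x̄‖`. By Cauchy–Schwarz
and the Lipschitz bounds on `g` and `h`, the two sampling errors then contribute at most
`(α − β) ‖x − x̄‖²` and `β ‖x − x̄‖²`, which the decay `−α ‖x − x̄‖²` absorbs.
-/

open RealInnerProductSpace

section

variable {E F : Type*} [NormedAddCommGroup E] [NormedAddCommGroup F]

theorem norm_le_mul_norm_sub_of_lipschitz_of_eq_zero {φ : E → F} {L : ℝ}
    (hφ : ∀ a b, ‖φ a - φ b‖ ≤ L * ‖a - b‖) {z : E} (hz : φ z = 0) (x : E) :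
    ‖φ x‖ ≤ L * ‖x - z‖ := by
  simpa [hz] using hφ x z

variable [InnerProductSpace ℝ F]

theorem inner_sub_le_of_lipschitz {g : E → F} {L A : ℝ} (hg : ∀ a b, ‖g a - g b‖ ≤ L * ‖a - b‖)
    {u : F} (hu : ‖u‖ ≤ A) (x y : E) : ⟪u, g y - g x⟫ ≤ A * (L * ‖x - y‖) :=
  calc ⟪u, g y - g x⟫ ≤ ‖u‖ * ‖g y - g x‖ := real_inner_le_norm _ _
    _ ≤ A * (L * ‖x - y‖) := by
      rw [← norm_sub_rev y x]
      exact mul_le_mul hu (hg y x) (norm_nonneg _) ((norm_nonneg u).trans hu)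

theorem inner_sub_le_of_norm_sub_le_div_mul {g : E → F} {L K c r : ℝ} (hL : 0 < L) (hK : 0 < K)
    (hg : ∀ a b, ‖g a - g b‖ ≤ L * ‖a - b‖) {u : F} (hu : ‖u‖ ≤ K * r) {x y : E}
    (hxy : ‖x - y‖ ≤ c / (K * L) * r) : ⟪u, g y - g x⟫ ≤ c * r ^ 2 :=
  calc ⟪u, g y - g x⟫ ≤ K * r * (L * ‖x - y‖) := inner_sub_le_of_lipschitz hg hu x y
    _ ≤ K * r * (L * (c / (K * L) * r)) := by
      have : 0 ≤ K * r := (norm_nonneg u).trans hu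
      gcongr
    _ = c * r ^ 2 := by field_simp

end

theorem dissipation_nonpositive_of_sampled_bounds_general
    {n : ℕ} (f g h : EuclideanSpace ℝ (Fin n) → EuclideanSpace ℝ (Fin n))
    (Lg Lh : ℝ) (hLg : 0 < Lg) (hLh : 0 < Lh)
    (hg : ∀ a b, ‖g a - g b‖ ≤ Lg * ‖a - b‖)
    (hh : ∀ a b, ‖h a - h b‖ ≤ Lh * ‖a - b‖)
    (xb : EuclideanSpace ℝ (Fin n))
    (W : EuclideanSpace ℝ (Fin n) → ℝ)
    (LW : ℝ) (hLW : 0 < LW)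
    (hWLip : ∀ a b, ‖gradient W a - gradient W b‖ ≤ LW * ‖a - b‖)
    (hWbar : gradient W xb = 0)
    (α β : ℝ)
    (x : EuclideanSpace ℝ (Fin n))
    (hx : (inner ℝ (gradient W x) (f x + g x + h x) : ℝ) ≤ -α * ‖x - xb‖ ^ 2)
    (xk x0 : EuclideanSpace ℝ (Fin n))
    (hxk : ‖x - xk‖ ≤ ((α - β) / (LW * Lg)) * ‖x - xb‖)
    (hx0 : ‖x - x0‖ ≤ (β / (LW * Lh)) * ‖x - xb‖) :
    (inner ℝ (gradient W x)
        ((f x + g x + h x) + (g xk - g x) + (h x0 - h x)) : ℝ) ≤ 0 := by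
  have hgrad := norm_le_mul_norm_sub_of_lipschitz_of_eq_zero hWLip hWbar x
  have hgk := inner_sub_le_of_norm_sub_le_div_mul hLg hLW hg hgrad hxk
  have hh0 := inner_sub_le_of_norm_sub_le_div_mul hLh hLW hh hgrad hx0
  rw [inner_add_right, inner_add_right]
  linarith

/-- Monotonic decrease of `W` along the time-triggered dynamics: if
`(∇W(x))ᵀF(x) ≤ −α‖x − x̄‖²` with `F = f + g + h`, `0 < β < α`, and the
sampled states satisfy `‖x − x_k‖ ≤ ((α−β)/(L_W L_g))‖x − x̄‖` and
`‖x − x₀‖ ≤ (β/(L_W L_h))‖x − x̄‖`, then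
`(∇W(x))ᵀ(F(x) + g(x_k) − g(x) + h(x₀) − h(x)) ≤ 0`. -/
theorem dissipation_nonpositive_of_sampled_bounds
    {n : ℕ} (f g h : EuclideanSpace ℝ (Fin n) → EuclideanSpace ℝ (Fin n))
    (Lf Lg Lh : ℝ) (hLf : 0 < Lf) (hLg : 0 < Lg) (hLh : 0 < Lh)
    (hf : ∀ a b, ‖f a - f b‖ ≤ Lf * ‖a - b‖)
    (hg : ∀ a b, ‖g a - g b‖ ≤ Lg * ‖a - b‖)
    (hh : ∀ a b, ‖h a - h b‖ ≤ Lh * ‖a - b‖)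
    (xb : EuclideanSpace ℝ (Fin n)) (heq : f xb + g xb + h xb = 0)
    (W : EuclideanSpace ℝ (Fin n) → ℝ) (hW : Differentiable ℝ W)
    (LW : ℝ) (hLW : 0 < LW)
    (hWLip : ∀ a b, ‖gradient W a - gradient W b‖ ≤ LW * ‖a - b‖)
    (hWbar : gradient W xb = 0)
    (α β : ℝ) (hβ : 0 < β) (hβα : β < α)
    (x : EuclideanSpace ℝ (Fin n))
    (hx : (inner ℝ (gradient W x) (f x + g x + h x) : ℝ) ≤ -α * ‖x - xb‖ ^ 2)
    (xk x0 : EuclideanSpace ℝ (Fin n))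
    (hxk : ‖x - xk‖ ≤ ((α - β) / (LW * Lg)) * ‖x - xb‖)
    (hx0 : ‖x - x0‖ ≤ (β / (LW * Lh)) * ‖x - xb‖) :
    (inner ℝ (gradient W x)
        ((f x + g x + h x) + (g xk - g x) + (h x0 - h x)) : ℝ) ≤ 0 :=
  dissipation_nonpositive_of_sampled_bounds_general f g h Lg Lh hLg hLh hg hh xb W LW hLW hWLip
    hWbar α β x hx xk x0 hxk hx0
end

section
/- Under the power network setup below, let x : [0, T] → ℝ^{4n} be a differentiable solution of ẋ = F(x), and write x(t) = (φ(t), ω(t), b(t), P_g(t), λ(t)). Then for all t ∈ [0, T]: (d/dt) V(x(t)) = −ω(t)ᵀA ω(t) − (1/σ²)(b(t) − b̄)ᵀQ^{-1}(b(t) − b̄) − (ρ/σ²)(1ᵀ(P_g(t) − P̄_g))². In particular, t ↦ V(x(t)) is nonincreasing. -/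
open Matrix Finset

/-- Index set for the state `x = (φ, ω, b, P_g, λ)` of the interconnected
bidding/power-network dynamics. -/
abbrev StIdx (n : ℕ) := Fin (n - 1) ⊕ (Fin n ⊕ (Fin n ⊕ (Fin n ⊕ Fin 1)))

/-- State space `ℝ^{n−1} × ℝ^n × ℝ^n × ℝ^n × ℝ` with the Euclidean norm. -/
abbrev St (n : ℕ) := EuclideanSpace ℝ (StIdx n)

/-- Voltage phase angle differences component `φ`. -/
def phiOf {n : ℕ} (x : St n) : Fin (n - 1) → ℝ := fun i => x (Sum.inl i)
/-- Frequency deviation component `ω`. -/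
def omgOf {n : ℕ} (x : St n) : Fin n → ℝ := fun i => x (Sum.inr (Sum.inl i))
/-- Bid component `b`. -/
def bidOf {n : ℕ} (x : St n) : Fin n → ℝ := fun i => x (Sum.inr (Sum.inr (Sum.inl i)))
/-- Power generation component `P_g`. -/
def pgOf {n : ℕ} (x : St n) : Fin n → ℝ :=
  fun i => x (Sum.inr (Sum.inr (Sum.inr (Sum.inl i))))
/-- Shadow price component `λ`. -/
def lamOf {n : ℕ} (x : St n) : ℝ := x (Sum.inr (Sum.inr (Sum.inr (Sum.inr 0))))

/-- Assemble a state from its five components. -/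
noncomputable def mkSt {n : ℕ} (φ : Fin (n - 1) → ℝ) (ω b Pg : Fin n → ℝ) (ℓ : ℝ) : St n :=
  (WithLp.equiv 2 _).symm (Sum.elim φ (Sum.elim ω (Sum.elim b (Sum.elim Pg fun _ => ℓ))))

/-- Data of the power network and of the bidding dynamics: incidence matrices
`D` (graph) and `Dt` (spanning tree), line coefficients `Γ = diag γ`, diagonal
entries of the inertia matrix `M`, damping `A`, cost curvature `Q`, gains
`K_b`, `K_g`, `K_λ`, parameters `ρ, σ`, loads `P_d` and linear costs `c`. -/
structure NetData (n m : ℕ) where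
  D : Matrix (Fin n) (Fin m) ℝ
  Dt : Matrix (Fin n) (Fin (n - 1)) ℝ
  γ : Fin m → ℝ
  M : Fin n → ℝ
  A : Fin n → ℝ
  Q : Fin n → ℝ
  Kb : Fin n → ℝ
  Kg : Fin n → ℝ
  Klam : ℝ
  ρ : ℝ
  σ : ℝ
  Pd : Fin n → ℝ
  c : Fin n → ℝ

/-- The Moore–Penrose inverse `D_t^† = (D_tᵀD_t)⁻¹D_tᵀ` of the spanning tree
incidence matrix. -/
noncomputable def Ddag {n m : ℕ} (d : NetData n m) : Matrix (Fin (n - 1)) (Fin n) ℝ :=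
  (d.Dtᵀ * d.Dt)⁻¹ * d.Dtᵀ

/-- The matrix `E = Dᵀ D_t^{†T}`, so that `Eφ` is the vector of angle
differences along the edges. -/
noncomputable def Emat {n m : ℕ} (d : NetData n m) : Matrix (Fin m) (Fin (n - 1)) ℝ :=
  d.Dᵀ * (Ddag d)ᵀ

/-- The potential `U(φ) = −1ᵀΓcos(Eφ)` stored in the transmission lines. -/
noncomputable def Upot {n m : ℕ} (d : NetData n m) (φ : Fin (n - 1) → ℝ) : ℝ :=
  -∑ k, d.γ k * Real.cos ((Emat d).mulVec φ k)

/-- The gradient `∇U(φ) = EᵀΓsin(Eφ)` of the potential `U`. -/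
noncomputable def gradU {n m : ℕ} (d : NetData n m) (φ : Fin (n - 1) → ℝ) :
    Fin (n - 1) → ℝ :=
  (Emat d)ᵀ.mulVec fun k => d.γ k * Real.sin ((Emat d).mulVec φ k)

/-- The closed-loop vector field `F` of the interconnection of the power
network dynamics with the continuous-time bid and power-setpoint update
scheme:  `φ̇ = D_tᵀω`, `Mω̇ = −D_t∇U(φ) − Aω + P_g − P_d`,
`K_b ḃ = P_g − Q⁻¹b + Q⁻¹c`,
`K_g Ṗ_g = 1λ − b + ρ11ᵀ(P_d − P_g) − σ²ω`, `K_λ λ̇ = 1ᵀ(P_d − P_g)`. -/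
noncomputable def Fvec {n m : ℕ} (d : NetData n m) (x : St n) : St n :=
  mkSt (d.Dtᵀ.mulVec (omgOf x))
    (fun i => (d.M i)⁻¹ *
      (-(d.Dt.mulVec (gradU d (phiOf x))) i - d.A i * omgOf x i + pgOf x i - d.Pd i))
    (fun i => (d.Kb i)⁻¹ * (pgOf x i - (d.Q i)⁻¹ * bidOf x i + (d.Q i)⁻¹ * d.c i))
    (fun i => (d.Kg i)⁻¹ *
      (lamOf x - bidOf x i + d.ρ * (∑ j, (d.Pd j - pgOf x j)) - d.σ ^ 2 * omgOf x i))
    (d.Klam⁻¹ * ∑ j, (d.Pd j - pgOf x j))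

/-- The energy function
`V(x) = U(φ) − (φ−φ̄)ᵀ∇U(φ̄) − U(φ̄) + ½ωᵀMω
+ (1/2σ²)(‖b−b̄‖²_{K_b} + ‖P_g−P̄_g‖²_{K_g} + K_λ(λ−λ̄)²)`. -/
noncomputable def Vfun {n m : ℕ} (d : NetData n m) (xb : St n) (x : St n) : ℝ :=
  Upot d (phiOf x) - (∑ i, (phiOf x i - phiOf xb i) * gradU d (phiOf xb) i)
    - Upot d (phiOf xb)
    + (1 / 2) * ∑ i, d.M i * (omgOf x i) ^ 2
    + (1 / (2 * d.σ ^ 2)) *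
        ((∑ i, d.Kb i * (bidOf x i - bidOf xb i) ^ 2)
          + (∑ i, d.Kg i * (pgOf x i - pgOf xb i) ^ 2)
          + d.Klam * (lamOf x - lamOf xb) ^ 2)

/-- The LISS-Lyapunov candidate
`W_ε(x) = V(x) + ε₀ε₁(φ−φ̄)ᵀD_t^†Mω − (ε₀ε₂/σ²)(b−b̄)ᵀK_g(P_g−P̄_g)
− (ε₀ε₃/σ²)(λ−λ̄)1ᵀK_g(P_g−P̄_g)`. -/
noncomputable def Wfun {n m : ℕ} (d : NetData n m) (xb : St n)
    (ε₀ ε₁ ε₂ ε₃ : ℝ) (x : St n) : ℝ :=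
  Vfun d xb x
    + ε₀ * ε₁ * ∑ i, (phiOf x i - phiOf xb i)
        * ((Ddag d * Matrix.diagonal d.M).mulVec (omgOf x) i)
    - (ε₀ * ε₂ / d.σ ^ 2) * ∑ i, (bidOf x i - bidOf xb i) * (d.Kg i * (pgOf x i - pgOf xb i))
    - (ε₀ * ε₃ / d.σ ^ 2) * (lamOf x - lamOf xb) * ∑ i, d.Kg i * (pgOf x i - pgOf xb i)

/-- The region `Ω = {x : E φ ∈ [−γ, γ]^m}`. -/
def OmSet {n m : ℕ} (d : NetData n m) (γ : ℝ) : Set (St n) :=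
  {x | ∀ k, (Emat d).mulVec (phiOf x) k ∈ Set.Icc (-γ) γ}

/-!
At an equilibrium the frequency deviation vanishes: `D_tᵀω̄ = 0` and `rank D_t = n − 1` force
`ω̄ ∈ span 1`, while summing the swing equation (using `1ᵀD_t = 0` and `1ᵀ(P_d − P̄_g) = 0`)
gives `1ᵀAω̄ = 0`. The remaining equilibrium equations then read `b̄ = 1λ̄`,
`D_t∇U(φ̄) = P̄_g − P_d` and `Q⁻¹c = Q⁻¹b̄ − P̄_g`. Substituting them into the derivative of `V`
along `F`, the cross terms `ωᵀ(P_g − P̄_g)`, `(b − b̄)ᵀ(P_g − P̄_g)` and `(λ − λ̄)1ᵀ(P_g − P̄_g)`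
cancel in pairs between the network, bid and market parts, and only the three nonpositive
dissipation terms survive.
-/

namespace Matrix

variable {K κ ι : Type*} [Field K] [Fintype κ] [Fintype ι]

theorem sum_mulVec_eq_zero_of_one_vecMul_eq_zero {B : Matrix κ ι K} (hB : 1 ᵥ* B = 0)
    (g : ι → K) : ∑ i, (B *ᵥ g) i = 0 := by
  rw [← one_dotProduct, dotProduct_mulVec, hB, zero_dotProduct]

theorem exists_eq_smul_one_of_transpose_mulVec_eq_zero [Nonempty κ] {B : Matrix κ ι K}
    (hB : 1 ᵥ* B = 0) (hrank : B.rank = Fintype.card κ - 1) {w : κ → K}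
    (hw : Bᵀ *ᵥ w = 0) : ∃ α : K, w = α • 1 := by
  set L := Bᵀ.mulVecLin
  have hone_mem : (1 : κ → K) ∈ LinearMap.ker L := by
    rw [LinearMap.mem_ker, mulVecLin_apply, mulVec_transpose, hB]
  have hker : Module.finrank K (LinearMap.ker L) = 1 := by
    have := L.finrank_range_add_finrank_ker
    rw [Module.finrank_fintype_fun_eq_card, ← Matrix.rank, rank_transpose, hrank] at this
    have : 0 < Fintype.card κ := Fintype.card_pos
    omega
  have hspan : Submodule.span K {(1 : κ → K)} = LinearMap.ker L :=
    Submodule.eq_of_le_of_finrank_le ((Submodule.span_singleton_le_iff_mem _ _).2 hone_mem)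
      (by rw [hker, finrank_span_singleton one_ne_zero])
  obtain ⟨α, hα⟩ := Submodule.mem_span_singleton.mp (hspan ▸ (LinearMap.mem_ker.2 hw : w ∈ _))
  exact ⟨α, hα.symm⟩

end Matrix

section VectorField

variable {n m : ℕ} (d : NetData n m) (x : St n)

theorem phiOf_Fvec : phiOf (Fvec d x) = d.Dtᵀ *ᵥ omgOf x := rfl

theorem omgOf_Fvec (i : Fin n) : omgOf (Fvec d x) i = (d.M i)⁻¹ *
    (-(d.Dt *ᵥ gradU d (phiOf x)) i - d.A i * omgOf x i + pgOf x i - d.Pd i) := rfl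

theorem bidOf_Fvec (i : Fin n) : bidOf (Fvec d x) i =
    (d.Kb i)⁻¹ * (pgOf x i - (d.Q i)⁻¹ * bidOf x i + (d.Q i)⁻¹ * d.c i) := rfl

theorem pgOf_Fvec (i : Fin n) : pgOf (Fvec d x) i = (d.Kg i)⁻¹ *
    (lamOf x - bidOf x i + d.ρ * (∑ j, (d.Pd j - pgOf x j)) - d.σ ^ 2 * omgOf x i) := rfl

theorem lamOf_Fvec : lamOf (Fvec d x) = d.Klam⁻¹ * ∑ j, (d.Pd j - pgOf x j) := rfl

end VectorField

section Equilibrium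

variable {n m : ℕ} {d : NetData n m} {xb : St n}

theorem sum_Pd_sub_pgOf_eq_zero_of_Fvec_eq_zero (hxb : Fvec d xb = 0) (hKlam : d.Klam ≠ 0) :
    ∑ j, (d.Pd j - pgOf xb j) = 0 :=
  (mul_eq_zero_iff_left (inv_ne_zero hKlam)).1 (congrArg lamOf hxb)

theorem swing_eq_zero_of_Fvec_eq_zero (hxb : Fvec d xb = 0) (hM : ∀ i, d.M i ≠ 0) (i : Fin n) :
    -(d.Dt *ᵥ gradU d (phiOf xb)) i - d.A i * omgOf xb i + pgOf xb i - d.Pd i = 0 :=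
  (mul_eq_zero_iff_left (inv_ne_zero (hM i))).1 (congrFun (congrArg omgOf hxb) i)

theorem omgOf_eq_zero_of_Fvec_eq_zero (hxb : Fvec d xb = 0) (hn : 0 < n)
    (hDt1 : 1 ᵥ* d.Dt = 0) (hDtrank : d.Dt.rank = n - 1)
    (hA : ∀ i, 0 < d.A i) (hM : ∀ i, d.M i ≠ 0) (hKlam : d.Klam ≠ 0) :
    omgOf xb = 0 := by
  have : Nonempty (Fin n) := ⟨⟨0, hn⟩⟩
  obtain ⟨α, hα⟩ := d.Dt.exists_eq_smul_one_of_transpose_mulVec_eq_zero hDt1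
    (by rwa [Fintype.card_fin]) (congrArg phiOf hxb)
  have hsum : ∑ i, d.A i * omgOf xb i = 0 := by
    have h := Finset.sum_eq_zero fun i (_ : i ∈ Finset.univ) =>
      swing_eq_zero_of_Fvec_eq_zero hxb hM i
    have hDt := d.Dt.sum_mulVec_eq_zero_of_one_vecMul_eq_zero hDt1 (gradU d (phiOf xb))
    have hPd := sum_Pd_sub_pgOf_eq_zero_of_Fvec_eq_zero hxb hKlam
    simp only [Finset.sum_sub_distrib, Finset.sum_add_distrib, Finset.sum_neg_distrib] at h hPd
    linarith
  have hApos : 0 < ∑ i, d.A i := Finset.sum_pos (fun i _ => hA i) Finset.univ_nonempty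
  have hα0 : α * ∑ i, d.A i = 0 := by simpa [hα, Finset.mul_sum, mul_comm] using hsum
  rw [hα, (mul_eq_zero_iff_right hApos.ne').1 hα0, zero_smul]

theorem Dt_mulVec_gradU_of_Fvec_eq_zero (hxb : Fvec d xb = 0) (hM : ∀ i, d.M i ≠ 0)
    (hω : omgOf xb = 0) (i : Fin n) :
    (d.Dt *ᵥ gradU d (phiOf xb)) i = pgOf xb i - d.Pd i := by
  have h := swing_eq_zero_of_Fvec_eq_zero hxb hM i
  rw [hω, Pi.zero_apply, mul_zero] at h
  linarith

theorem inv_Q_mul_c_of_Fvec_eq_zero (hxb : Fvec d xb = 0) (hKb : ∀ i, d.Kb i ≠ 0) (i : Fin n) :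
    (d.Q i)⁻¹ * d.c i = (d.Q i)⁻¹ * bidOf xb i - pgOf xb i := by
  have h := (mul_eq_zero_iff_left (inv_ne_zero (hKb i))).1 (congrFun (congrArg bidOf hxb) i)
  linarith

theorem bidOf_eq_lamOf_of_Fvec_eq_zero (hxb : Fvec d xb = 0) (hKg : ∀ i, d.Kg i ≠ 0)
    (hKlam : d.Klam ≠ 0) (hω : omgOf xb = 0) (i : Fin n) : bidOf xb i = lamOf xb := by
  have h := (mul_eq_zero_iff_left (inv_ne_zero (hKg i))).1 (congrFun (congrArg pgOf hxb) i)
  rw [sum_Pd_sub_pgOf_eq_zero_of_Fvec_eq_zero hxb hKlam, hω, Pi.zero_apply] at h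
  linarith

end Equilibrium

theorem HasDerivAt.euclideanSpace_apply {ι : Type*} [Fintype ι] {x : ℝ → EuclideanSpace ℝ ι}
    {v : EuclideanSpace ℝ ι} {t : ℝ} (hx : HasDerivAt x v t) (j : ι) :
    HasDerivAt (fun s => x s j) (v j) t :=
  (PiLp.hasFDerivAt_apply _ (x t) j).comp_hasDerivAt t hx

theorem HasDerivAt.sum_mul_sub_sq {ι : Type*} [Fintype ι] (w a : ι → ℝ) {f : ℝ → ι → ℝ}
    {f' : ι → ℝ} {t : ℝ} (hf : HasDerivAt f f' t) :
    HasDerivAt (fun s => ∑ i, w i * (f s i - a i) ^ 2)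
      (2 * ∑ i, w i * (f t i - a i) * f' i) t := by
  rw [Finset.mul_sum]
  refine HasDerivAt.fun_sum fun i _ => ?_
  refine ((((hasDerivAt_pi.1 hf i).sub_const (a i)).fun_pow 2).const_mul (w i)).congr_deriv ?_
  ring

section Derivative

variable {n m : ℕ}

theorem hasDerivAt_Upot_comp (d : NetData n m) {φ : ℝ → Fin (n - 1) → ℝ}
    {φ' : Fin (n - 1) → ℝ} {t : ℝ} (hφ : HasDerivAt φ φ' t) :
    HasDerivAt (fun s => Upot d (φ s)) (gradU d (φ t) ⬝ᵥ φ') t := by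
  have hEφ : HasDerivAt (fun s => Emat d *ᵥ φ s) (Emat d *ᵥ φ') t :=
    (LinearMap.toContinuousLinearMap (Emat d).mulVecLin).hasFDerivAt.comp_hasDerivAt t hφ
  have hU := (HasDerivAt.fun_sum fun k (_ : k ∈ Finset.univ) =>
    ((hasDerivAt_pi.1 hEφ k).cos.const_mul (d.γ k))).fun_neg
  refine hU.congr_deriv ?_
  rw [gradU, mulVec_transpose, ← dotProduct_mulVec]
  simp only [dotProduct, ← Finset.sum_neg_distrib]
  exact Finset.sum_congr rfl fun k _ => by ring

noncomputable def dirDerivVfun (d : NetData n m) (xb x v : St n) : ℝ :=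
  (gradU d (phiOf x) - gradU d (phiOf xb)) ⬝ᵥ phiOf v
    + ∑ i, d.M i * omgOf x i * omgOf v i
    + (1 / d.σ ^ 2) * (∑ i, d.Kb i * (bidOf x i - bidOf xb i) * bidOf v i
      + ∑ i, d.Kg i * (pgOf x i - pgOf xb i) * pgOf v i
      + d.Klam * (lamOf x - lamOf xb) * lamOf v)

theorem hasDerivAt_Vfun_comp (d : NetData n m) (xb : St n) {x : ℝ → St n} {v : St n} {t : ℝ}
    (hx : HasDerivAt x v t) :
    HasDerivAt (fun s => Vfun d xb (x s)) (dirDerivVfun d xb (x t) v) t := by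
  have hφ : HasDerivAt (fun s => phiOf (x s)) (phiOf v) t :=
    hasDerivAt_pi.2 fun i => hx.euclideanSpace_apply _
  have hω : HasDerivAt (fun s => omgOf (x s)) (omgOf v) t :=
    hasDerivAt_pi.2 fun i => hx.euclideanSpace_apply _
  have hb : HasDerivAt (fun s => bidOf (x s)) (bidOf v) t :=
    hasDerivAt_pi.2 fun i => hx.euclideanSpace_apply _
  have hp : HasDerivAt (fun s => pgOf (x s)) (pgOf v) t :=
    hasDerivAt_pi.2 fun i => hx.euclideanSpace_apply _
  have hlam : HasDerivAt (fun s => lamOf (x s)) (lamOf v) t := hx.euclideanSpace_apply _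
  have hlin : HasDerivAt (fun s => ∑ i, (phiOf (x s) i - phiOf xb i) * gradU d (phiOf xb) i)
      (∑ i, phiOf v i * gradU d (phiOf xb) i) t :=
    HasDerivAt.fun_sum fun i _ => ((hasDerivAt_pi.1 hφ i).sub_const _).mul_const _
  have hkin : HasDerivAt (fun s => ∑ i, d.M i * (omgOf (x s) i) ^ 2)
      (2 * ∑ i, d.M i * omgOf (x t) i * omgOf v i) t := by
    simpa using hω.sum_mul_sub_sq d.M 0
  have hV := ((((hasDerivAt_Upot_comp d hφ).sub hlin).sub_const (Upot d (phiOf xb))).add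
    (hkin.const_mul (1 / 2))).add (((hb.sum_mul_sub_sq d.Kb (bidOf xb)).add
      (hp.sum_mul_sub_sq d.Kg (pgOf xb))).add
      (((hlam.sub_const (lamOf xb)).fun_pow 2).const_mul d.Klam) |>.const_mul (1 / (2 * d.σ ^ 2)))
  refine hV.congr_deriv ?_
  rw [dirDerivVfun, sub_dotProduct]
  simp only [dotProduct, mul_comm (phiOf v _)]
  ring

end Derivative

section Dissipation

variable {n m : ℕ} {d : NetData n m} {xb : St n} (x : St n)

theorem network_energy_rate (hM : ∀ i, d.M i ≠ 0)
    (hgrad : ∀ i, (d.Dt *ᵥ gradU d (phiOf xb)) i = pgOf xb i - d.Pd i) :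
    (gradU d (phiOf x) - gradU d (phiOf xb)) ⬝ᵥ phiOf (Fvec d x)
      + ∑ i, d.M i * omgOf x i * omgOf (Fvec d x) i
      = -∑ i, d.A i * omgOf x i ^ 2 + ∑ i, omgOf x i * (pgOf x i - pgOf xb i) := by
  rw [phiOf_Fvec, dotProduct_mulVec, vecMul_transpose, mulVec_sub, dotProduct,
    ← Finset.sum_neg_distrib, ← Finset.sum_add_distrib, ← Finset.sum_add_distrib]
  refine Finset.sum_congr rfl fun i _ => ?_
  rw [omgOf_Fvec, Pi.sub_apply, hgrad i]
  field_simp [hM i]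
  ring

theorem bid_energy_rate (hKb : ∀ i, d.Kb i ≠ 0)
    (hc : ∀ i, (d.Q i)⁻¹ * d.c i = (d.Q i)⁻¹ * bidOf xb i - pgOf xb i) :
    ∑ i, d.Kb i * (bidOf x i - bidOf xb i) * bidOf (Fvec d x) i
      = ∑ i, (bidOf x i - bidOf xb i) * (pgOf x i - pgOf xb i)
        - ∑ i, (d.Q i)⁻¹ * (bidOf x i - bidOf xb i) ^ 2 := by
  rw [← Finset.sum_sub_distrib]
  refine Finset.sum_congr rfl fun i _ => ?_
  rw [bidOf_Fvec, hc i]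
  field_simp [hKb i]
  ring

theorem market_energy_rate (hKg : ∀ i, d.Kg i ≠ 0) (hKlam : d.Klam ≠ 0)
    (hbid : ∀ i, bidOf xb i = lamOf xb) (hPd : ∑ j, (d.Pd j - pgOf xb j) = 0) :
    ∑ i, d.Kg i * (pgOf x i - pgOf xb i) * pgOf (Fvec d x) i
      + d.Klam * (lamOf x - lamOf xb) * lamOf (Fvec d x)
      = -∑ i, (bidOf x i - bidOf xb i) * (pgOf x i - pgOf xb i)
        - d.ρ * (∑ i, (pgOf x i - pgOf xb i)) ^ 2
        - d.σ ^ 2 * ∑ i, omgOf x i * (pgOf x i - pgOf xb i) := by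
  set P := ∑ i, (pgOf x i - pgOf xb i)
  have hS : ∑ j, (d.Pd j - pgOf x j) = -P := by
    rw [← zero_sub, ← hPd, ← Finset.sum_sub_distrib]
    exact Finset.sum_congr rfl fun j _ => by ring
  have hterm : ∀ i, d.Kg i * (pgOf x i - pgOf xb i) * pgOf (Fvec d x) i
      = (lamOf x - lamOf xb) * (pgOf x i - pgOf xb i)
        - (bidOf x i - bidOf xb i) * (pgOf x i - pgOf xb i)
        - d.ρ * P * (pgOf x i - pgOf xb i)
        - d.σ ^ 2 * (omgOf x i * (pgOf x i - pgOf xb i)) := fun i => by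
    rw [pgOf_Fvec, hS, hbid i]
    field_simp [hKg i]
    ring
  rw [Finset.sum_congr rfl fun i _ => hterm i, Finset.sum_sub_distrib, Finset.sum_sub_distrib,
    Finset.sum_sub_distrib, ← Finset.mul_sum, ← Finset.mul_sum, ← Finset.mul_sum, lamOf_Fvec, hS]
  field_simp
  ring

theorem dirDerivVfun_Fvec (x : St n) (hxb : Fvec d xb = 0) (hω : omgOf xb = 0)
    (hM : ∀ i, d.M i ≠ 0) (hKb : ∀ i, d.Kb i ≠ 0) (hKg : ∀ i, d.Kg i ≠ 0) (hKlam : d.Klam ≠ 0)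
    (hσ : d.σ ≠ 0) :
    dirDerivVfun d xb x (Fvec d x)
      = -(∑ i, d.A i * (omgOf x i) ^ 2)
        - (1 / d.σ ^ 2) * ∑ i, (d.Q i)⁻¹ * (bidOf x i - bidOf xb i) ^ 2
        - (d.ρ / d.σ ^ 2) * (∑ i, (pgOf x i - pgOf xb i)) ^ 2 := by
  rw [dirDerivVfun, add_assoc (∑ i, d.Kb i * _ * _),
    network_energy_rate x hM (Dt_mulVec_gradU_of_Fvec_eq_zero hxb hM hω),
    bid_energy_rate x hKb (inv_Q_mul_c_of_Fvec_eq_zero hxb hKb),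
    market_energy_rate x hKg hKlam (bidOf_eq_lamOf_of_Fvec_eq_zero hxb hKg hKlam hω)
      (sum_Pd_sub_pgOf_eq_zero_of_Fvec_eq_zero hxb hKlam)]
  field_simp
  ring

end Dissipation

theorem energy_dissipation_along_solutions_general
    (n m : ℕ) (hn : 2 ≤ n)
    (d : NetData n m)
    (hDt1 : Matrix.vecMul (fun _ => (1 : ℝ)) d.Dt = 0)
    (hDtrank : d.Dt.rank = n - 1)
    (hM : ∀ i, 0 < d.M i) (hA : ∀ i, 0 < d.A i)
    (hQ : ∀ i, 0 < d.Q i) (hKb : ∀ i, 0 < d.Kb i) (hKg : ∀ i, 0 < d.Kg i)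
    (hKlam : 0 < d.Klam) (hρ : 0 < d.ρ) (hσ : 0 < d.σ)
    (xb : St n) (hxb : Fvec d xb = 0)
    (T : ℝ) (x : ℝ → St n)
    (hx : ∀ t ∈ Set.Icc (0 : ℝ) T, HasDerivAt x (Fvec d (x t)) t) :
    (∀ t ∈ Set.Icc (0 : ℝ) T,
      HasDerivAt (fun s => Vfun d xb (x s))
        (-(∑ i, d.A i * (omgOf (x t) i) ^ 2)
          - (1 / d.σ ^ 2) * ∑ i, (d.Q i)⁻¹ * (bidOf (x t) i - bidOf xb i) ^ 2
          - (d.ρ / d.σ ^ 2) * (∑ i, (pgOf (x t) i - pgOf xb i)) ^ 2) t) ∧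
    AntitoneOn (fun t => Vfun d xb (x t)) (Set.Icc 0 T) := by
  have hM' : ∀ i, d.M i ≠ 0 := fun i => (hM i).ne'
  have hω := omgOf_eq_zero_of_Fvec_eq_zero hxb (by omega) hDt1 hDtrank hA hM' hKlam.ne'
  have hrate := fun t => dirDerivVfun_Fvec (x t) hxb hω hM' (fun i => (hKb i).ne')
    (fun i => (hKg i).ne') hKlam.ne' hσ.ne'
  have hderiv := fun t ht => hasDerivAt_Vfun_comp d xb (hx t ht)
  refine ⟨fun t ht => hrate t ▸ hderiv t ht, antitoneOn_of_hasDerivWithinAt_nonpos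
    (convex_Icc 0 T) (fun t ht => (hderiv t ht).continuousAt.continuousWithinAt)
    (fun t ht => (hderiv t (interior_subset ht)).hasDerivWithinAt) fun t _ => ?_⟩
  rw [hrate t]
  have hAω : 0 ≤ ∑ i, d.A i * (omgOf (x t) i) ^ 2 :=
    Finset.sum_nonneg fun i _ => mul_nonneg (hA i).le (sq_nonneg _)
  have hQb : 0 ≤ ∑ i, (d.Q i)⁻¹ * (bidOf (x t) i - bidOf xb i) ^ 2 :=
    Finset.sum_nonneg fun i _ => mul_nonneg (inv_nonneg.2 (hQ i).le) (sq_nonneg _)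
  have : 0 ≤ (d.ρ / d.σ ^ 2) * (∑ i, (pgOf (x t) i - pgOf xb i)) ^ 2 := by positivity
  have : 0 ≤ (1 / d.σ ^ 2) * ∑ i, (d.Q i)⁻¹ * (bidOf (x t) i - bidOf xb i) ^ 2 := by positivity
  linarith

/-- Dissipation identity for the energy function along solutions of the
interconnected dynamics `ẋ = F(x)`:
`(d/dt)V(x(t)) = −ωᵀAω − (1/σ²)(b − b̄)ᵀQ⁻¹(b − b̄) − (ρ/σ²)(1ᵀ(P_g − P̄_g))²`;
in particular `t ↦ V(x(t))` is nonincreasing. -/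
theorem energy_dissipation_along_solutions
    (n m : ℕ) (hn : 2 ≤ n) (hm : 1 ≤ m)
    (d : NetData n m)
    (hD1 : Matrix.vecMul (fun _ => (1 : ℝ)) d.D = 0)
    (hDrank : d.D.rank = n - 1)
    (hDt1 : Matrix.vecMul (fun _ => (1 : ℝ)) d.Dt = 0)
    (hDtrank : d.Dt.rank = n - 1)
    (hγ : ∀ k, 0 < d.γ k) (hM : ∀ i, 0 < d.M i) (hA : ∀ i, 0 < d.A i)
    (hQ : ∀ i, 0 < d.Q i) (hKb : ∀ i, 0 < d.Kb i) (hKg : ∀ i, 0 < d.Kg i)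
    (hKlam : 0 < d.Klam) (hρ : 0 < d.ρ) (hσ : 0 < d.σ)
    (xb : St n) (hxb : Fvec d xb = 0)
    (hsec : ∀ k, (Emat d).mulVec (phiOf xb) k ∈ Set.Ioo (-(Real.pi / 2)) (Real.pi / 2))
    (T : ℝ) (hT : 0 ≤ T) (x : ℝ → St n)
    (hx : ∀ t ∈ Set.Icc (0 : ℝ) T, HasDerivAt x (Fvec d (x t)) t) :
    (∀ t ∈ Set.Icc (0 : ℝ) T,
      HasDerivAt (fun s => Vfun d xb (x s))
        (-(∑ i, d.A i * (omgOf (x t) i) ^ 2)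
          - (1 / d.σ ^ 2) * ∑ i, (d.Q i)⁻¹ * (bidOf (x t) i - bidOf xb i) ^ 2
          - (d.ρ / d.σ ^ 2) * (∑ i, (pgOf (x t) i - pgOf xb i)) ^ 2) t) ∧
    AntitoneOn (fun t => Vfun d xb (x t)) (Set.Icc 0 T) :=
  energy_dissipation_along_solutions_general n m hn d hDt1 hDtrank hM hA hQ hKb hKg hKlam hρ hσ xb
    hxb T x hx
end
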